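/- arXiv:1710.07348 — 6 statements merged into one kernel-verified Lean document; each statement's English description precedes it below -/
import Mathlib

section
/- If R : ℝ^N → [0,∞) satisfies R(z) = R(|z|) for all z (where |z| is the componentwise absolute value), is separable (R(z) = Σ_j r_j(z_j) for functions r_j : ℝ → [0,∞)), and is concave on the nonnegative orthant, then R is subadditive on ℝ^N: R(z + z') ≤ R(z) + R(z') for all z, z' ∈ ℝ^N. -/
/-!
Separability reduces everything to the profiles `r j`, each concave on `[0, ∞)` because it is
`R` restricted to a coordinate axis, up to a constant. A concave function on `[0, ∞)` that is
bounded below is nondecreasing, and concavity alone gives `f (a + b) + f 0 ≤ f a + f b`. With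
`f 0 ≥ 0` and `|a + b| ≤ |a| + |b|` this yields `f |a + b| ≤ f |a| + f |b|`, which is summed over
the coordinates using `R z = ∑ j, r j |z j|`.
-/

open Set Filter Topology

namespace ConcaveOn

variable {f : ℝ → ℝ}

theorem map_add_add_map_zero_le (hf : ConcaveOn ℝ (Ici 0) f) {a b : ℝ} (ha : 0 ≤ a)
    (hb : 0 ≤ b) : f (a + b) + f 0 ≤ f a + f b := by
  rcases (add_nonneg ha hb).eq_or_lt with hab | hab
  · obtain ⟨rfl, rfl⟩ : a = 0 ∧ b = 0 := ⟨by linarith, by linarith⟩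
    simp
  have hsum : a / (a + b) + b / (a + b) = 1 := by field_simp
  have hx : a + b ∈ Ici (0 : ℝ) := hab.le
  have h0 : (0 : ℝ) ∈ Ici 0 := self_mem_Ici
  have hfa := hf.2 hx h0 (div_nonneg ha hab.le) (div_nonneg hb hab.le) hsum
  have hfb := hf.2 hx h0 (div_nonneg hb hab.le) (div_nonneg ha hab.le) (by linarith)
  simp only [smul_eq_mul, mul_zero, add_zero, div_mul_cancel₀ _ hab.ne'] at hfa hfb
  have : (a / (a + b) + b / (a + b)) * (f (a + b) + f 0) ≤ f a + f b := by linarith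
  rwa [hsum, one_mul] at this

theorem monotoneOn_of_forall_le (hf : ConcaveOn ℝ (Ici 0) f) {m : ℝ}
    (hm : ∀ x, 0 ≤ x → m ≤ f x) : MonotoneOn f (Ici 0) := by
  intro a ha b _ hab
  -- `b = l • c + (1 - l) • a` with `c = a + (b - a) / l`; then let `l → 0`, using `m ≤ f c`.
  have hcomb : ∀ l ∈ Ioc (0 : ℝ) 1, (1 - l) * f a + l * m ≤ f b := by
    rintro l ⟨hl0, hl1⟩
    have hc : a + (b - a) / l ∈ Ici (0 : ℝ) :=
      add_nonneg ha (div_nonneg (sub_nonneg.2 hab) hl0.le)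
    have h := hf.2 hc ha hl0.le (sub_nonneg.2 hl1) (add_sub_cancel l 1)
    have hb : l • (a + (b - a) / l) + (1 - l) • a = b := by
      simp only [smul_eq_mul]; field_simp; ring
    rw [hb, smul_eq_mul, smul_eq_mul] at h
    nlinarith [hm _ hc]
  have hlim : Tendsto (fun l : ℝ => (1 - l) * f a + l * m) (𝓝[>] 0) (𝓝 (f a)) :=
    tendsto_nhdsWithin_of_tendsto_nhds (Continuous.tendsto' (by fun_prop) _ _ (by simp))
  exact le_of_tendsto hlim (eventually_of_mem (Ioc_mem_nhdsGT one_pos) hcomb)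

theorem map_abs_add_le (hf : ConcaveOn ℝ (Ici 0) f) (hf₀ : ∀ x, 0 ≤ x → 0 ≤ f x) (a b : ℝ) :
    f |a + b| ≤ f |a| + f |b| :=
  calc f |a + b| ≤ f (|a| + |b|) :=
        hf.monotoneOn_of_forall_le hf₀ (mem_Ici.2 (abs_nonneg _))
          (mem_Ici.2 (add_nonneg (abs_nonneg _) (abs_nonneg _))) (abs_add_le a b)
    _ ≤ f (|a| + |b|) + f 0 := le_add_of_nonneg_right (hf₀ 0 le_rfl)
    _ ≤ f |a| + f |b| := hf.map_add_add_map_zero_le (abs_nonneg a) (abs_nonneg b)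

theorem of_sum_apply {ι : Type*} [Fintype ι] [DecidableEq ι] {r : ι → ℝ → ℝ}
    (h : ConcaveOn ℝ (Ici 0) fun z : ι → ℝ => ∑ k, r k (z k)) (j : ι) :
    ConcaveOn ℝ (Ici 0) (r j) := by
  have hpre : LinearMap.single ℝ (fun _ : ι => ℝ) j ⁻¹' Ici 0 = Ici 0 := by
    ext t; simp [Pi.single_nonneg]
  have := (hpre ▸ h.comp_linearMap (LinearMap.single ℝ (fun _ : ι => ℝ) j)).add_const
    (-∑ k ∈ Finset.univ.erase j, r k 0)
  refine this.congr fun t _ => ?_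
  simp only [Pi.add_apply, Function.comp_apply, LinearMap.coe_single]
  rw [← Finset.add_sum_erase _ _ (Finset.mem_univ j), Pi.single_eq_same,
    Finset.sum_congr rfl fun k hk => by rw [Pi.single_eq_of_ne (Finset.ne_of_mem_erase hk)]]
  ring

end ConcaveOn

theorem separable_concave_subadditive_general (N : ℕ) (R : (Fin N → ℝ) → ℝ)
    (r : Fin N → ℝ → ℝ)
    (hrnonneg : ∀ j t, 0 ≤ r j t)
    (habs : ∀ z : Fin N → ℝ, R z = R (fun j => |z j|))
    (hsep : ∀ z : Fin N → ℝ, R z = ∑ j, r j (z j))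
    (hconc : ∀ z z' : Fin N → ℝ, (∀ j, 0 ≤ z j) → (∀ j, 0 ≤ z' j) →
      ∀ l : ℝ, 0 ≤ l → l ≤ 1 →
      l * R z + (1 - l) * R z' ≤ R (fun j => l * z j + (1 - l) * z' j)) :
    ∀ z z' : Fin N → ℝ, R (z + z') ≤ R z + R z' := by
  have hR : ConcaveOn ℝ (Ici 0) R := by
    refine ⟨convex_Ici 0, fun z hz z' hz' l m hl hm hlm => ?_⟩
    obtain rfl : m = 1 - l := by linarith
    exact hconc z z' hz hz' l hl (by linarith)
  have hr (j : Fin N) : ConcaveOn ℝ (Ici 0) (r j) :=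
    (funext hsep ▸ hR).of_sum_apply j
  intro z z'
  calc R (z + z') = ∑ j, r j |z j + z' j| := by rw [habs, hsep]; rfl
    _ ≤ ∑ j, (r j |z j| + r j |z' j|) :=
      Finset.sum_le_sum fun j _ => (hr j).map_abs_add_le (fun t _ => hrnonneg j t) _ _
    _ = R z + R z' := by rw [Finset.sum_add_distrib, habs z, habs z', hsep, hsep]

/-- A separable, componentwise-even penalty that is concave on the nonnegative
orthant is subadditive on all of `ℝ^N`. -/
theorem separable_concave_subadditive (N : ℕ) (R : (Fin N → ℝ) → ℝ)
    (r : Fin N → ℝ → ℝ)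
    (hRnonneg : ∀ z : Fin N → ℝ, 0 ≤ R z)
    (hrnonneg : ∀ j t, 0 ≤ r j t)
    (habs : ∀ z : Fin N → ℝ, R z = R (fun j => |z j|))
    (hsep : ∀ z : Fin N → ℝ, R z = ∑ j, r j (z j))
    (hconc : ∀ z z' : Fin N → ℝ, (∀ j, 0 ≤ z j) → (∀ j, 0 ≤ z' j) →
      ∀ l : ℝ, 0 ≤ l → l ≤ 1 →
      l * R z + (1 - l) * R z' ≤ R (fun j => l * z j + (1 - l) * z' j)) :
    ∀ z z' : Fin N → ℝ, R (z + z') ≤ R z + R z' :=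
  separable_concave_subadditive_general N R r hrnonneg habs hsep hconc
end

section
/- The sorted ℓ1 penalty R(z) = Σ_{j=1}^N β_j |z|_[j], where 0 ≤ β_1 ≤ … ≤ β_N and |z|_[1] ≥ … ≥ |z|_[N] are the magnitudes of the components of z in decreasing order, is concave on the nonnegative orthant [0,∞)^N. -/
/-!
On the nonnegative orthant the penalty is the minimum of the linear functionals
`z ↦ ∑ j, β j * z (σ j)` over all permutations `σ`: by the rearrangement inequality, pairing the
increasing weights with the decreasingly sorted entries is the smallest such pairing. A minimum
of linear functions is concave; concretely, the permutation sorting the convex combination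
is an admissible (not necessarily optimal) pairing for each of the two endpoints.
-/

open Finset

theorem exists_perm_antitone_comp {α : Type*} [LinearOrder α] {n : ℕ} (f : Fin n → α) :
    ∃ σ : Equiv.Perm (Fin n), Antitone (f ∘ σ) :=
  ⟨Tuple.sort (OrderDual.toDual ∘ f), (Tuple.monotone_sort (OrderDual.toDual ∘ f)).dual_right⟩

theorem sum_mul_comp_le_sum_mul_comp_perm_of_antitone {α : Type*} [CommRing α] [LinearOrder α]
    [IsStrictOrderedRing α] {n : ℕ} {β f : Fin n → α} (hβ : Monotone β)
    {τ : Equiv.Perm (Fin n)} (hτ : Antitone (f ∘ τ)) (σ : Equiv.Perm (Fin n)) :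
    ∑ j, β j * f (τ j) ≤ ∑ j, β j * f (σ j) := by
  simpa using (hβ.antivary hτ).sum_mul_le_sum_mul_comp_perm (σ := τ⁻¹ * σ)

def IsSortedL1Penalty {N : ℕ} (β : Fin N → ℝ) (R : (Fin N → ℝ) → ℝ) : Prop :=
  ∀ z : Fin N → ℝ, ∀ σ : Equiv.Perm (Fin N),
    Antitone (fun j => |z (σ j)|) → R z = ∑ j, β j * |z (σ j)|

theorem IsSortedL1Penalty.le_sum_mul_abs_comp_perm {N : ℕ} {β : Fin N → ℝ}
    {R : (Fin N → ℝ) → ℝ} (hR : IsSortedL1Penalty β R) (hβ : Monotone β)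
    (z : Fin N → ℝ) (σ : Equiv.Perm (Fin N)) :
    R z ≤ ∑ j, β j * |z (σ j)| := by
  obtain ⟨τ, hτ⟩ := exists_perm_antitone_comp (fun j => |z j|)
  rw [hR z τ hτ]
  exact sum_mul_comp_le_sum_mul_comp_perm_of_antitone hβ hτ σ

theorem sortedL1_concave_general (N : ℕ) (β : Fin N → ℝ)
    (hβmono : Monotone β)
    (R : (Fin N → ℝ) → ℝ)
    (hR : ∀ z : Fin N → ℝ, ∀ σ : Equiv.Perm (Fin N),
      Antitone (fun j => |z (σ j)|) → R z = ∑ j, β j * |z (σ j)|)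
    (z z' : Fin N → ℝ) (hz : ∀ j, 0 ≤ z j) (hz' : ∀ j, 0 ≤ z' j)
    (l : ℝ) (hl0 : 0 ≤ l) (hl1 : l ≤ 1) :
    l * R z + (1 - l) * R z' ≤ R (fun j => l * z j + (1 - l) * z' j) := by
  have hR' : IsSortedL1Penalty β R := hR
  set w : Fin N → ℝ := fun j => l * z j + (1 - l) * z' j
  have hl1' : 0 ≤ 1 - l := sub_nonneg.2 hl1
  have hw : ∀ j, 0 ≤ w j := fun j =>
    add_nonneg (mul_nonneg hl0 (hz j)) (mul_nonneg hl1' (hz' j))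
  obtain ⟨σ, hσ⟩ := exists_perm_antitone_comp (fun j => |w j|)
  calc l * R z + (1 - l) * R z'
      ≤ l * ∑ j, β j * |z (σ j)| + (1 - l) * ∑ j, β j * |z' (σ j)| := by
        gcongr
        exacts [hR'.le_sum_mul_abs_comp_perm hβmono z σ, hR'.le_sum_mul_abs_comp_perm hβmono z' σ]
    _ = ∑ j, β j * |w (σ j)| := by
        simp only [abs_of_nonneg (hz _), abs_of_nonneg (hz' _), abs_of_nonneg (hw _), w, mul_sum,
          ← sum_add_distrib]
        congr 1 with j
        ring
    _ = R w := (hR w σ hσ).symm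

/-- The sorted `ℓ1` penalty `R z = ∑ j, β j * |z|_[j]`, where
`0 ≤ β 0 ≤ … ≤ β (N-1)` and `|z|_[0] ≥ … ≥ |z|_[N-1]` are the magnitudes of the
components of `z` in decreasing order, is concave on the nonnegative orthant.
Here `R` is characterized by: for any permutation `σ` arranging `|z|` in
decreasing order, `R z = ∑ j, β j * |z (σ j)|`. -/
theorem sortedL1_concave (N : ℕ) (β : Fin N → ℝ)
    (hβnonneg : ∀ j, 0 ≤ β j) (hβmono : Monotone β)
    (R : (Fin N → ℝ) → ℝ)
    (hR : ∀ z : Fin N → ℝ, ∀ σ : Equiv.Perm (Fin N),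
      Antitone (fun j => |z (σ j)|) → R z = ∑ j, β j * |z (σ j)|)
    (z z' : Fin N → ℝ) (hz : ∀ j, 0 ≤ z j) (hz' : ∀ j, 0 ≤ z' j)
    (l : ℝ) (hl0 : 0 ≤ l) (hl1 : l ≤ 1) :
    l * R z + (1 - l) * R z' ≤ R (fun j => l * z j + (1 - l) * z' j) :=
  sortedL1_concave_general N β hβmono R hR z z' hz hz' l hl0 hl1
end

section
/- (Sufficiency direction of generalized NSP for separable concave penalties) Let R : ℝ^N → [0,∞) satisfy R(z) = R(|z|), be separable, concave on the nonnegative orthant, and R(0) = 0. Let A ∈ ℝ^{m×N}. If every nonzero v ∈ ker(A) satisfies R(v_S) < R(v_{S̄}) for all S with #S ≤ s, then every s-sparse vector x ∈ ℝ^N is the unique minimizer of R(z) subject to Az = Ax. -/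
/-!
Each summand `r j` is concave, nonnegative and even, hence nondecreasing and subadditive on
`[0, ∞)`, hence satisfies the triangle inequality on all of `ℝ`. For `z ≠ x` with `A z = A x`
put `v = x - z ∈ ker A`. Since `x` vanishes off `S`, the triangle inequality gives
`R x ≤ R v_S + R z_S`, while `R z = R v_S̄ + R z_S`; so `R x - R z ≤ R v_S - R v_S̄ < 0`.
-/

open Set

section ConcaveOnIci

variable {f : ℝ → ℝ}

theorem ConcaveOn.mul_le_map_mul_of_map_zero_nonneg (hf : ConcaveOn ℝ (Ici 0) f) (h0 : 0 ≤ f 0)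
    {t x : ℝ} (ht₀ : 0 ≤ t) (ht₁ : t ≤ 1) (hx : 0 ≤ x) : t * f x ≤ f (t * x) := by
  have h := hf.2 (mem_Ici.2 hx) (mem_Ici.2 le_rfl) ht₀ (sub_nonneg.2 ht₁) (by ring)
  simp only [smul_eq_mul, mul_zero, add_zero] at h
  linarith [mul_nonneg (sub_nonneg.2 ht₁) h0]

theorem ConcaveOn.map_add_le_of_map_zero_nonneg (hf : ConcaveOn ℝ (Ici 0) f) (h0 : 0 ≤ f 0)
    {a b : ℝ} (ha : 0 ≤ a) (hb : 0 ≤ b) : f (a + b) ≤ f a + f b := by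
  rcases (add_nonneg ha hb).eq_or_lt with hab | hab
  · obtain ⟨rfl, rfl⟩ : a = 0 ∧ b = 0 := ⟨by linarith, by linarith⟩
    simpa using h0
  have hfa := hf.mul_le_map_mul_of_map_zero_nonneg h0 (div_nonneg ha hab.le)
    ((div_le_one hab).2 (by linarith)) hab.le
  have hfb := hf.mul_le_map_mul_of_map_zero_nonneg h0 (div_nonneg hb hab.le)
    ((div_le_one hab).2 (by linarith)) hab.le
  rw [div_mul_cancel₀ _ hab.ne'] at hfa hfb
  calc f (a + b) = a / (a + b) * f (a + b) + b / (a + b) * f (a + b) := by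
        field_simp
    _ ≤ f a + f b := add_le_add hfa hfb

/-- A concave function on a half-line that decreases somewhere decreases at least linearly from
there on, so it cannot be bounded below. -/
theorem ConcaveOn.monotoneOn_of_bddBelow {a c : ℝ} (hf : ConcaveOn ℝ (Ici a) f)
    (hc : ∀ x ∈ Ici a, c ≤ f x) : MonotoneOn f (Ici a) := by
  intro x hx y hy hxy
  rcases hxy.eq_or_lt with rfl | hxy
  · exact le_rfl
  by_contra! hlt
  set d := (f x - f y) / (y - x) with hd
  have hdpos : 0 < d := div_pos (sub_pos.2 hlt) (sub_pos.2 hxy)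
  set z := y + (f y - c) / d + 1
  have hyz : y < z := by
    have : 0 ≤ (f y - c) / d := div_nonneg (sub_nonneg.2 (hc y hy)) hdpos.le
    linarith
  have hz : z ∈ Ici a := le_trans hy hyz.le
  have hslope := hf.slope_anti_adjacent hx hz hxy hyz
  rw [div_le_iff₀ (sub_pos.2 hyz)] at hslope
  have hfz : f z ≤ c - d := by
    have : (f y - f x) / (y - x) = -d := by rw [hd, ← neg_div, neg_sub]
    rw [this] at hslope
    have : d * (z - y) = f y - c + d := by
      rw [show z - y = (f y - c) / d + 1 by ring, mul_add, mul_div_cancel₀ _ hdpos.ne', mul_one]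
    linarith
  linarith [hc z hz]

theorem ConcaveOn.map_add_le_of_abs (hf : ConcaveOn ℝ (Ici 0) f)
    (hnonneg : ∀ t, 0 ≤ t → 0 ≤ f t) (habs : ∀ t, f |t| = f t) (u w : ℝ) : f (u + w) ≤ f u + f w :=
  calc f (u + w) = f |u + w| := (habs _).symm
    _ ≤ f (|u| + |w|) :=
      hf.monotoneOn_of_bddBelow hnonneg (mem_Ici.2 (abs_nonneg _))
        (mem_Ici.2 (add_nonneg (abs_nonneg _) (abs_nonneg _)))
        (abs_add_le u w)
    _ ≤ f |u| + f |w| :=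
      hf.map_add_le_of_map_zero_nonneg (hnonneg 0 le_rfl) (abs_nonneg _) (abs_nonneg _)
    _ = f u + f w := by rw [habs, habs]

end ConcaveOnIci

section Separable

variable {ι : Type*} [Fintype ι]

theorem apply_zero_eq_zero_of_forall_eq_sum {R : (ι → ℝ) → ℝ} {r : ι → ℝ → ℝ}
    (hsep : ∀ z, R z = ∑ j, r j (z j)) (hr : ∀ j t, 0 ≤ r j t) (hzero : R 0 = 0) (j : ι) :
    r j 0 = 0 := by
  rw [hsep] at hzero
  exact (Finset.sum_eq_zero_iff_of_nonneg fun k _ => hr k 0).1 hzero j (Finset.mem_univ j)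

theorem eq_comp_single_of_forall_eq_sum [DecidableEq ι] {R : (ι → ℝ) → ℝ} {r : ι → ℝ → ℝ}
    (hsep : ∀ z, R z = ∑ j, r j (z j)) (hr0 : ∀ j, r j 0 = 0) (j : ι) :
    r j = R ∘ Pi.single j := by
  ext t
  rw [Function.comp_apply, hsep,
    Finset.sum_eq_single j (fun k _ hk => by simp [hk, hr0]) (by simp)]
  simp

/-- The coordinatewise form of the null space argument: on `S` the triangle inequality
`φ(x) ≤ φ(x - z) + φ(z)`, off `S` the identity `φ(z) = φ(x - z)` since `x` vanishes there. -/
theorem sum_sub_sum_le_of_support_subset [DecidableEq ι] (φ : ι → ℝ → ℝ)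
    (h0 : ∀ j, φ j 0 = 0) (htri : ∀ j u w, φ j (u + w) ≤ φ j u + φ j w)
    (hneg : ∀ j t, φ j (-t) = φ j t)
    {S : Finset ι} {x : ι → ℝ} (hx : ∀ j ∉ S, x j = 0) (z : ι → ℝ) :
    ∑ j, φ j (x j) - ∑ j, φ j (z j) ≤
      ∑ j, φ j (if j ∈ S then (x - z) j else 0) - ∑ j, φ j (if j ∈ S then 0 else (x - z) j) := by
  rw [← Finset.sum_sub_distrib, ← Finset.sum_sub_distrib]
  refine Finset.sum_le_sum fun j _ => ?_
  by_cases hj : j ∈ S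
  · simpa [hj, h0] using htri j (x j - z j) (z j)
  · simp [hj, hx j hj, h0, hneg]

end Separable

theorem gNSP_sufficient_separable_general (m N s : ℕ) (A : Matrix (Fin m) (Fin N) ℝ)
    (R : (Fin N → ℝ) → ℝ) (r : Fin N → ℝ → ℝ)
    (hrnonneg : ∀ j t, 0 ≤ r j t)
    (habs : ∀ z : Fin N → ℝ, R z = R (fun j => |z j|))
    (hsep : ∀ z : Fin N → ℝ, R z = ∑ j, r j (z j))
    (hconc : ∀ z z' : Fin N → ℝ, (∀ j, 0 ≤ z j) → (∀ j, 0 ≤ z' j) →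
      ∀ l : ℝ, 0 ≤ l → l ≤ 1 →
      l * R z + (1 - l) * R z' ≤ R (fun j => l * z j + (1 - l) * z' j))
    (hzero : R 0 = 0)
    (hNSP : ∀ v : Fin N → ℝ, A.mulVec v = 0 → v ≠ 0 →
      ∀ S : Finset (Fin N), S.card ≤ s →
        R (fun j => if j ∈ S then v j else 0) <
          R (fun j => if j ∈ S then 0 else v j)) :
    ∀ x : Fin N → ℝ,
      (∃ S : Finset (Fin N), S.card ≤ s ∧ ∀ j ∉ S, x j = 0) →
      ∀ z : Fin N → ℝ, A.mulVec z = A.mulVec x → z ≠ x → R x < R z := by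
  rintro x ⟨S, hS, hxS⟩ z hAz hzx
  have hr0 := apply_zero_eq_zero_of_forall_eq_sum hsep hrnonneg hzero
  have hsingle := eq_comp_single_of_forall_eq_sum hsep hr0
  have hRconc : ConcaveOn ℝ (Ici 0) R := ⟨convex_Ici 0, fun z hz z' hz' a b ha hb hab => by
    obtain rfl : b = 1 - a := by linarith
    exact hconc z z' hz hz' a ha (by linarith)⟩
  have hrconc (j : Fin N) : ConcaveOn ℝ (Ici 0) (r j) := by
    have hpre : LinearMap.single ℝ (fun _ => ℝ) j ⁻¹' Ici 0 = Ici 0 := by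
      ext t
      simp [Pi.single_nonneg]
    rw [hsingle j, ← hpre]
    exact hRconc.comp_linearMap (LinearMap.single ℝ _ j)
  have hrabs (j : Fin N) (t : ℝ) : r j |t| = r j t := by
    simpa [hsingle j, Pi.apply_single (fun _ => abs) (fun _ => abs_zero)] using
      (habs (Pi.single j t)).symm
  have htri (j : Fin N) := (hrconc j).map_add_le_of_abs (fun t _ => hrnonneg j t) (hrabs j)
  have hdiff := sum_sub_sum_le_of_support_subset r hr0 htri
    (fun j t => by rw [← hrabs, abs_neg, hrabs]) hxS z
  have hlt := hNSP (x - z) (by rw [Matrix.mulVec_sub, hAz, sub_self])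
    (sub_ne_zero.2 hzx.symm) S hS
  simp only [hsep] at hlt ⊢
  linarith

/-- Sufficiency direction of the generalized null space property for separable
concave penalties: if every nonzero `v ∈ ker A` satisfies `R (v_S) < R (v_{S̄})`
for all `S` with `#S ≤ s`, then every `s`-sparse vector `x` is the unique
minimizer of `R` subject to `A z = A x`. -/
theorem gNSP_sufficient_separable (m N s : ℕ) (A : Matrix (Fin m) (Fin N) ℝ)
    (R : (Fin N → ℝ) → ℝ) (r : Fin N → ℝ → ℝ)
    (hRnonneg : ∀ z : Fin N → ℝ, 0 ≤ R z)
    (hrnonneg : ∀ j t, 0 ≤ r j t)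
    (habs : ∀ z : Fin N → ℝ, R z = R (fun j => |z j|))
    (hsep : ∀ z : Fin N → ℝ, R z = ∑ j, r j (z j))
    (hconc : ∀ z z' : Fin N → ℝ, (∀ j, 0 ≤ z j) → (∀ j, 0 ≤ z' j) →
      ∀ l : ℝ, 0 ≤ l → l ≤ 1 →
      l * R z + (1 - l) * R z' ≤ R (fun j => l * z j + (1 - l) * z' j))
    (hzero : R 0 = 0)
    (hNSP : ∀ v : Fin N → ℝ, A.mulVec v = 0 → v ≠ 0 →
      ∀ S : Finset (Fin N), S.card ≤ s →
        R (fun j => if j ∈ S then v j else 0) <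
          R (fun j => if j ∈ S then 0 else v j)) :
    ∀ x : Fin N → ℝ,
      (∃ S : Finset (Fin N), S.card ≤ s ∧ ∀ j ∉ S, x j = 0) →
      ∀ z : Fin N → ℝ, A.mulVec z = A.mulVec x → z ≠ x → R x < R z :=
  gNSP_sufficient_separable_general m N s A R r hrnonneg habs hsep hconc hzero hNSP
end

section
/- Let N > 1 and 1 ≤ s < N/2. Suppose R : ℝ^N → [0,∞) satisfies R(z) = R(|z|), is separable, symmetric (permutation-invariant), concave on the nonnegative orthant, R(0) = 0, and R(z) > 0 for all z ≠ 0. Then the ℓ1 null-space set is contained in the R null-space set: every v ∈ ℝ^N such that ‖v_S‖_1 < ‖v_{S̄}‖_1 for all S with #S ≤ s also satisfies R(v_S) < R(v_{S̄}) for all S with #S ≤ s. -/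
/-!
Separability, symmetry and `R 0 = 0` give `R z = ∑ j, g |z j|` with `g t = R (Pi.single i t)`,
a nonnegative concave function on `[0, ∞)` vanishing at `0`; hence `g` is nondecreasing and
`g x / x` is nonincreasing. Let `T` consist of `s` coordinates of largest `|v j|`, separated from
`Tᶜ` by a threshold `t > 0`. Comparing `g` with the chord `x ↦ (g t / t) x` (above it on `Tᶜ`,
below it on `T`) turns the `ℓ1` inequality for `T` into the `R` inequality for `T`, and by
monotonicity of `g` the set `T` is the worst case among all `S` with `#S ≤ s`.
-/

open Finset

theorem ConcaveOn.monotoneOn_Ici_of_nonneg {g : ℝ → ℝ} (hg : ConcaveOn ℝ (Set.Ici 0) g)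
    (hg_nonneg : ∀ x, 0 ≤ x → 0 ≤ g x) : MonotoneOn g (Set.Ici 0) := by
  intro x hx y hy hxy
  rcases hxy.eq_or_lt with rfl | hxy
  · rfl
  by_contra! hgyx
  -- a negative secant slope `m` on `[x, y]` bounds all slopes further right, forcing `g z < 0`
  set m := (g y - g x) / (y - x)
  have hm : m < 0 := div_neg_of_neg_of_pos (by linarith) (by linarith)
  set z := y + 1 - g y / m
  have hyz : y < z := by
    have : g y / m ≤ 0 := div_nonpos_of_nonneg_of_nonpos (hg_nonneg y hy) hm.le
    linarith
  have hz : z ∈ Set.Ici 0 := Set.mem_Ici.2 (by linarith [hy.out])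
  have hslope := hg.slope_anti_adjacent hx hz hxy hyz
  rw [div_le_iff₀ (by linarith)] at hslope
  have hmz : m * (z - y) = m - g y := by
    rw [show z - y = 1 - g y / m by ring, mul_sub, mul_one, mul_div_cancel₀ _ hm.ne]
  linarith [hg_nonneg z hz]

theorem ConcaveOn.mul_le_mul_of_le_of_map_zero {g : ℝ → ℝ} (hg : ConcaveOn ℝ (Set.Ici 0) g)
    (hg0 : g 0 = 0) {x y : ℝ} (hx : 0 ≤ x) (hxy : x ≤ y) : x * g y ≤ y * g x := by
  rcases (hx.trans hxy).eq_or_lt with rfl | hy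
  · obtain rfl : x = 0 := le_antisymm hxy hx
    rfl
  have h := hg.2 (Set.mem_Ici.2 hy.le) (Set.mem_Ici.2 le_rfl) (div_nonneg hx hy.le)
    (sub_nonneg.2 ((div_le_one hy).2 hxy)) (add_sub_cancel _ _)
  simp only [smul_eq_mul, hg0, mul_zero, add_zero, div_mul_cancel₀ _ hy.ne'] at h
  rw [div_mul_eq_mul_div, div_le_iff₀ hy] at h
  linarith

theorem ConcaveOn.sum_lt_sum_of_threshold {ι : Type*} {g : ℝ → ℝ}
    (hg : ConcaveOn ℝ (Set.Ici 0) g) (hg0 : g 0 = 0) {f : ι → ℝ} {A B : Finset ι} {t : ℝ}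
    (ht : 0 < t) (hgt : 0 < g t) (hA : ∀ i ∈ A, t ≤ f i) (hB : ∀ j ∈ B, f j ≤ t)
    (hB_nonneg : ∀ j ∈ B, 0 ≤ f j) (hAB : ∑ i ∈ A, f i < ∑ j ∈ B, f j) :
    ∑ i ∈ A, g (f i) < ∑ j ∈ B, g (f j) := by
  have hA' : t * ∑ i ∈ A, g (f i) ≤ g t * ∑ i ∈ A, f i := by
    rw [mul_sum, mul_sum]
    refine sum_le_sum fun i hi => ?_
    linarith [hg.mul_le_mul_of_le_of_map_zero hg0 ht.le (hA i hi)]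
  have hB' : g t * ∑ j ∈ B, f j ≤ t * ∑ j ∈ B, g (f j) := by
    rw [mul_sum, mul_sum]
    refine sum_le_sum fun j hj => ?_
    linarith [hg.mul_le_mul_of_le_of_map_zero hg0 (hB_nonneg j hj) (hB j hj)]
  have := mul_lt_mul_of_pos_left hAB hgt
  exact lt_of_mul_lt_mul_left (by linarith) ht.le

section Threshold

variable {ι : Type*} [DecidableEq ι]

theorem Finset.exists_card_eq_forall_notMem_le [Fintype ι] (f : ι → ℝ) {s : ℕ}
    (hs : s ≤ Fintype.card ι) :
    ∃ T : Finset ι, T.card = s ∧ ∀ i ∈ T, ∀ j ∉ T, f j ≤ f i := by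
  obtain ⟨T₀, -, hT₀⟩ := exists_subset_card_eq (s := univ) (n := s) (by simpa using hs)
  obtain ⟨T, hT, hmax⟩ := (univ.powersetCard s).exists_max_image (fun U => ∑ j ∈ U, f j)
    ⟨T₀, mem_powersetCard.2 ⟨subset_univ _, hT₀⟩⟩
  have hTcard := (mem_powersetCard.1 hT).2
  refine ⟨T, hTcard, fun i hi j hj => ?_⟩
  -- `T` maximises the sum, so exchanging `i` for `j` cannot increase it
  have hj' : j ∉ T.erase i := fun h => hj (mem_of_mem_erase h)
  have hs_pos := card_pos.2 ⟨i, hi⟩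
  have hswap := hmax (insert j (T.erase i)) <| mem_powersetCard.2 ⟨subset_univ _, by
    rw [card_insert_of_notMem hj', card_erase_of_mem hi]; omega⟩
  rw [sum_insert hj', ← add_sum_erase T f hi] at hswap
  linarith

theorem Finset.exists_pos_threshold [Fintype ι] {f : ι → ℝ} {T : Finset ι}
    (hT : ∀ i ∈ T, ∀ j ∉ T, f j ≤ f i) (hpos : 0 < ∑ j ∈ Tᶜ, f j) :
    ∃ t, 0 < t ∧ (∀ i ∈ T, t ≤ f i) ∧ ∀ j ∉ T, f j ≤ t := by
  obtain ⟨j₀, hj₀, hmax⟩ := Tᶜ.exists_max_image f (nonempty_of_sum_ne_zero hpos.ne')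
  refine ⟨f j₀, ?_, fun i hi => hT i hi j₀ (mem_compl.1 hj₀),
    fun j hj => hmax j (mem_compl.2 hj)⟩
  by_contra! h
  linarith [sum_nonpos fun j hj => (hmax j hj).trans h]

theorem Finset.sum_le_sum_of_card_le_of_threshold {h : ι → ℝ} {S T : Finset ι} {c : ℝ}
    (hc : 0 ≤ c) (hST : S.card ≤ T.card) (hT : ∀ i ∈ T, c ≤ h i) (hTc : ∀ j ∉ T, h j ≤ c) :
    ∑ j ∈ S, h j ≤ ∑ j ∈ T, h j := by
  have hcard : (S \ T).card ≤ (T \ S).card := by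
    have := card_sdiff_add_card_inter S T
    have := card_sdiff_add_card_inter T S
    rw [inter_comm] at this
    omega
  have hdiff : ∑ j ∈ S \ T, h j ≤ ∑ j ∈ T \ S, h j := calc
    ∑ j ∈ S \ T, h j ≤ (S \ T).card • c :=
      sum_le_card_nsmul _ _ _ fun j hj => hTc j (mem_sdiff.1 hj).2
    _ ≤ (T \ S).card • c := nsmul_le_nsmul_left hc hcard
    _ ≤ ∑ j ∈ T \ S, h j := card_nsmul_le_sum _ _ _ fun j hj => hT j (mem_sdiff.1 hj).1
  have := sum_inter_add_sum_sdiff S T h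
  have := sum_inter_add_sum_sdiff T S h
  rw [inter_comm] at this
  linarith

end Threshold

section SeparablePenalty

variable {ι : Type*} [DecidableEq ι]

theorem eq_sum_single_of_separable [Fintype ι] {R : (ι → ℝ) → ℝ} {r : ι → ℝ → ℝ}
    (hsep : ∀ z, R z = ∑ j, r j (z j)) (hzero : R 0 = 0) (z : ι → ℝ) :
    R z = ∑ j, R (Pi.single j (z j)) := by
  have hr0 : ∑ j, r j 0 = 0 := by simpa [hsep] using hzero
  have hsingle : ∀ j t, R (Pi.single j t) = r j t - r j 0 := by
    intro j t
    calc R (Pi.single j t) = ∑ k, r k ((Pi.single j t : ι → ℝ) k) - ∑ k, r k 0 := by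
          rw [hr0, sub_zero, hsep]
      _ = r j t - r j 0 := by
        rw [← sum_sub_distrib, sum_eq_single j]
        · simp
        · intro k _ hk
          simp [hk]
        · simp
  simp_rw [hsingle, sum_sub_distrib, hr0, sub_zero, hsep]

theorem map_single_eq_of_perm_invariant {β γ : Type*} [Zero β] {R : (ι → β) → γ}
    (hsymm : ∀ (π : Equiv.Perm ι) z, R (z ∘ π) = R z) (i j : ι) (t : β) :
    R (Pi.single i t) = R (Pi.single j t) := by
  rw [← hsymm (Equiv.swap i j), Pi.single_comp_equiv, Equiv.symm_swap, Equiv.swap_apply_left]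

theorem ConcaveOn.comp_single {R : (ι → ℝ) → ℝ} (hR : ConcaveOn ℝ (Set.Ici 0) R) (i : ι) :
    ConcaveOn ℝ (Set.Ici 0) fun t => R (Pi.single i t) := by
  have h := hR.comp_linearMap (LinearMap.single ℝ (fun _ => ℝ) i)
  rwa [show LinearMap.single ℝ (fun _ => ℝ) i ⁻¹' Set.Ici 0 = Set.Ici 0 by ext; simp] at h

theorem eq_sum_single_abs_of_separable [Fintype ι] {R : (ι → ℝ) → ℝ} {r : ι → ℝ → ℝ}
    (hsep : ∀ z, R z = ∑ j, r j (z j)) (hzero : R 0 = 0)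
    (hsymm : ∀ (π : Equiv.Perm ι) z, R (z ∘ π) = R z) (habs : ∀ z, R z = R fun j => |z j|)
    (i : ι) (z : ι → ℝ) : R z = ∑ j, R (Pi.single i |z j|) := by
  rw [habs, eq_sum_single_of_separable hsep hzero]
  simp only [map_single_eq_of_perm_invariant hsymm _ i]

theorem eq_sum_mem_single_abs_of_separable [Fintype ι] {R : (ι → ℝ) → ℝ} {r : ι → ℝ → ℝ}
    (hsep : ∀ z, R z = ∑ j, r j (z j)) (hzero : R 0 = 0)
    (hsymm : ∀ (π : Equiv.Perm ι) z, R (z ∘ π) = R z) (habs : ∀ z, R z = R fun j => |z j|)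
    (i : ι) (S : Finset ι) (v : ι → ℝ) :
    R (fun j => if j ∈ S then v j else 0) = ∑ j ∈ S, R (Pi.single i |v j|) := by
  have hterm (j : ι) : R (Pi.single i |if j ∈ S then v j else 0|) =
      if j ∈ S then R (Pi.single i |v j|) else 0 := by
    split_ifs <;> simp [hzero]
  rw [eq_sum_single_abs_of_separable hsep hzero hsymm habs i]
  simp_rw [hterm, sum_ite_mem, univ_inter]

end SeparablePenalty

theorem l1_NSP_subset_gNSP_general (N s : ℕ)
    (R : (Fin N → ℝ) → ℝ) (r : Fin N → ℝ → ℝ)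
    (habs : ∀ z : Fin N → ℝ, R z = R (fun j => |z j|))
    (hsep : ∀ z : Fin N → ℝ, R z = ∑ j, r j (z j))
    (hsymm : ∀ (π : Equiv.Perm (Fin N)) (z : Fin N → ℝ), R (z ∘ π) = R z)
    (hconc : ∀ z z' : Fin N → ℝ, (∀ j, 0 ≤ z j) → (∀ j, 0 ≤ z' j) →
      ∀ l : ℝ, 0 ≤ l → l ≤ 1 →
      l * R z + (1 - l) * R z' ≤ R (fun j => l * z j + (1 - l) * z' j))
    (hzero : R 0 = 0) (hpos : ∀ z : Fin N → ℝ, z ≠ 0 → 0 < R z)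
    (v : Fin N → ℝ)
    (hv : ∀ S : Finset (Fin N), S.card ≤ s →
      ∑ j ∈ S, |v j| < ∑ j ∈ Sᶜ, |v j|) :
    ∀ S : Finset (Fin N), S.card ≤ s →
      R (fun j => if j ∈ S then v j else 0) <
        R (fun j => if j ∈ S then 0 else v j) := by
  have hsN : s < N := by
    by_contra! h
    exact (hv univ (by simpa using h)).not_ge (by rw [compl_univ, sum_empty]; positivity)
  have : NeZero N := ⟨by omega⟩
  have hconcave : ConcaveOn ℝ (Set.Ici 0) R := ⟨convex_Ici 0, fun z hz z' hz' a b ha _ hab => by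
    obtain rfl : b = 1 - a := by linarith
    exact hconc z z' hz hz' a ha (by linarith)⟩
  have hR_nonneg (z) : 0 ≤ R z := (eq_or_ne z 0).elim (fun h => h ▸ hzero.ge) (hpos z · |>.le)
  set g : ℝ → ℝ := fun t => R (Pi.single 0 t)
  have hg : ConcaveOn ℝ (Set.Ici 0) g := hconcave.comp_single 0
  have hg0 : g 0 = 0 := by simpa [g] using hzero
  have hg_pos (t) (ht : 0 < t) : 0 < g t := hpos _ (Pi.single_eq_zero_iff.not.2 ht.ne')
  have hR_restrict (S : Finset (Fin N)) :=
    eq_sum_mem_single_abs_of_separable hsep hzero hsymm habs 0 S v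
  obtain ⟨T, hTcard, hT⟩ := exists_card_eq_forall_notMem_le (|v ·|) (by simpa using hsN.le)
  obtain ⟨t, ht, hTt, hTct⟩ := exists_pos_threshold hT
    ((sum_nonneg fun j _ => abs_nonneg _).trans_lt (hv T hTcard.le))
  have hT_gap : ∑ j ∈ T, g |v j| < ∑ j ∈ Tᶜ, g |v j| :=
    hg.sum_lt_sum_of_threshold hg0 ht (hg_pos t ht) hTt (fun j hj => hTct j (mem_compl.1 hj))
      (fun j _ => abs_nonneg _) (hv T hTcard.le)
  intro S hS
  have hg_mono := hg.monotoneOn_Ici_of_nonneg fun t _ => hR_nonneg _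
  have hST : ∑ j ∈ S, g |v j| ≤ ∑ j ∈ T, g |v j| :=
    sum_le_sum_of_card_le_of_threshold (hR_nonneg _) (hS.trans hTcard.ge)
      (fun i hi => hg_mono ht.le (abs_nonneg (v i)) (hTt i hi))
      (fun j hj => hg_mono (abs_nonneg (v j)) ht.le (hTct j hj))
  rw [hR_restrict, show (fun j => if j ∈ S then 0 else v j) = fun j => if j ∈ Sᶜ then v j else 0
    by simp_rw [mem_compl, ite_not], hR_restrict]
  linarith [sum_add_sum_compl S fun j => g |v j|, sum_add_sum_compl T fun j => g |v j|]

/-- For a separable, symmetric, componentwise-even penalty `R`, concave on the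
nonnegative orthant, with `R 0 = 0` and `R z > 0` for `z ≠ 0`: the `ℓ1`
null-space set is contained in the `R` null-space set.  That is, every `v` with
`‖v_S‖₁ < ‖v_{S̄}‖₁` for all `S` with `#S ≤ s` also satisfies
`R (v_S) < R (v_{S̄})` for all such `S`. -/
theorem l1_NSP_subset_gNSP (N s : ℕ) (hN : 1 < N) (hs : 1 ≤ s) (hsN : 2 * s < N)
    (R : (Fin N → ℝ) → ℝ) (r : Fin N → ℝ → ℝ)
    (hRnonneg : ∀ z : Fin N → ℝ, 0 ≤ R z)
    (hrnonneg : ∀ j t, 0 ≤ r j t)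
    (habs : ∀ z : Fin N → ℝ, R z = R (fun j => |z j|))
    (hsep : ∀ z : Fin N → ℝ, R z = ∑ j, r j (z j))
    (hsymm : ∀ (π : Equiv.Perm (Fin N)) (z : Fin N → ℝ), R (z ∘ π) = R z)
    (hconc : ∀ z z' : Fin N → ℝ, (∀ j, 0 ≤ z j) → (∀ j, 0 ≤ z' j) →
      ∀ l : ℝ, 0 ≤ l → l ≤ 1 →
      l * R z + (1 - l) * R z' ≤ R (fun j => l * z j + (1 - l) * z' j))
    (hzero : R 0 = 0) (hpos : ∀ z : Fin N → ℝ, z ≠ 0 → 0 < R z)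
    (v : Fin N → ℝ)
    (hv : ∀ S : Finset (Fin N), S.card ≤ s →
      ∑ j ∈ S, |v j| < ∑ j ∈ Sᶜ, |v j|) :
    ∀ S : Finset (Fin N), S.card ≤ s →
      R (fun j => if j ∈ S then v j else 0) <
        R (fun j => if j ∈ S then 0 else v j) :=
  l1_NSP_subset_gNSP_general N s R r habs hsep hsymm hconc hzero hpos v hv
end

section
/- The ℓ1 − ℓ2 penalty satisfies condition (R2): for all z_1, …, z_{s+1} > 0, R(z_1,…,z_s,z_{s+1},0,…,0) > R(z_1,…,z_{s-1}, z_s + z_{s+1}, 0,…,0), where R(z) = ‖z‖_1 − ‖z‖_2 on ℝ^N with N ≥ s+1. -/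
/-! Merging two coordinates of the same sign into one keeps the `ℓ1` norm but strictly increases
the sum of squares, by the cross term `2 x_a x_b > 0`; so `ℓ1 - ℓ2` strictly decreases. The
padded vector `(z_1, …, z_{s-1}, z_s + z_{s+1}, 0, …)` is exactly such a merge of
`(z_1, …, z_{s+1}, 0, …)`. -/

open Finset Function

variable {ι : Type*} [Fintype ι] [DecidableEq ι]

noncomputable def l1MinusL2 (x : ι → ℝ) : ℝ :=
  ∑ i, |x i| - Real.sqrt (∑ i, x i ^ 2)

def mergeCoords (x : ι → ℝ) (a b : ι) : ι → ℝ :=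
  update (update x a (x a + x b)) b 0

theorem sum_comp_update_add {M : Type*} [AddCommMonoid M] (f : ℝ → M) (x : ι → ℝ) (c : ι)
    (v : ℝ) : ∑ i, f (update x c v i) + f (x c) = ∑ i, f (x i) + f v := by
  rw [← add_sum_erase _ _ (mem_univ c), ← add_sum_erase _ _ (mem_univ c),
    sum_congr rfl fun i hi => by rw [update_of_ne (ne_of_mem_erase hi)], update_self]
  abel

theorem sum_comp_mergeCoords {M : Type*} [AddCommMonoid M] (f : ℝ → M) (x : ι → ℝ) {a b : ι}
    (hab : a ≠ b) :
    ∑ i, f (mergeCoords x a b i) + f (x a) + f (x b) = ∑ i, f (x i) + f (x a + x b) + f 0 := by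
  have hb := sum_comp_update_add f (update x a (x a + x b)) b 0
  have ha := sum_comp_update_add f x a (x a + x b)
  rw [update_of_ne hab.symm] at hb
  rw [mergeCoords, add_right_comm, hb, add_right_comm, ha]

theorem sum_abs_mergeCoords {x : ι → ℝ} {a b : ι} (hab : a ≠ b) (hx : 0 < x a * x b) :
    ∑ i, |mergeCoords x a b i| = ∑ i, |x i| := by
  have h := sum_comp_mergeCoords (|·|) x hab
  have hsign : |x a + x b| = |x a| + |x b| := by
    rw [abs_add_eq_add_abs_iff]
    rcases pos_and_pos_or_neg_and_neg_of_mul_pos hx with h | h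
    · exact .inl ⟨h.1.le, h.2.le⟩
    · exact .inr ⟨h.1.le, h.2.le⟩
  simp only [hsign, abs_zero] at h
  linarith

theorem sum_sq_mergeCoords (x : ι → ℝ) {a b : ι} (hab : a ≠ b) :
    ∑ i, mergeCoords x a b i ^ 2 = ∑ i, x i ^ 2 + 2 * (x a * x b) := by
  have h := sum_comp_mergeCoords (· ^ 2) x hab
  linarith

theorem l1MinusL2_mergeCoords_lt {x : ι → ℝ} {a b : ι} (hab : a ≠ b) (hx : 0 < x a * x b) :
    l1MinusL2 (mergeCoords x a b) < l1MinusL2 x := by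
  have hsqrt : Real.sqrt (∑ i, x i ^ 2) < Real.sqrt (∑ i, mergeCoords x a b i ^ 2) := by
    rw [sum_sq_mergeCoords x hab]
    exact Real.sqrt_lt_sqrt (sum_nonneg fun i _ => sq_nonneg _) (by linarith)
  unfold l1MinusL2
  linarith [sum_abs_mergeCoords hab hx]

/-- The `ℓ1 - ℓ2` penalty satisfies condition (R2): for `z 0, …, z s > 0`,
`R (z 0,…,z (s-1), z s, 0,…,0) > R (z 0,…,z (s-2), z (s-1) + z s, 0,…,0)`,
where `R w = ‖w‖₁ - ‖w‖₂` on `ℝ^N` with `N ≥ s + 1`. -/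
theorem l1_minus_l2_satisfies_R2 (N s : ℕ) (hs : 1 ≤ s) (hN : s + 1 ≤ N)
    (z : Fin (s + 1) → ℝ) (hz : ∀ i, 0 < z i)
    (v₁ v₂ : Fin N → ℝ)
    (hv₁ : v₁ = fun (j : Fin N) => if h : (j : ℕ) < s + 1 then z ⟨j, h⟩ else 0)
    (hv₂ : v₂ = fun (j : Fin N) =>
      if h : (j : ℕ) < s - 1 then z ⟨j, by omega⟩
      else if (j : ℕ) = s - 1 then z ⟨s - 1, by omega⟩ + z ⟨s, by omega⟩
      else 0) :
    (∑ j, |v₂ j|) - Real.sqrt (∑ j, (v₂ j) ^ 2) <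
      (∑ j, |v₁ j|) - Real.sqrt (∑ j, (v₁ j) ^ 2) := by
  set a : Fin N := ⟨s - 1, by omega⟩
  set b : Fin N := ⟨s, by omega⟩
  have hab : a ≠ b := by simp [a, b, Fin.ext_iff]; omega
  have hmerge : v₂ = mergeCoords v₁ a b := by
    funext j
    simp only [hv₂, hv₁, mergeCoords, update_apply, a, b, Fin.ext_iff]
    split_ifs <;> first | rfl | omega
  have hpos : 0 < v₁ a * v₁ b := by
    simp only [hv₁, a, b, dif_pos (show s - 1 < s + 1 by omega), dif_pos (Nat.lt_succ_self s)]
    exact mul_pos (hz _) (hz _)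
  show l1MinusL2 v₂ < l1MinusL2 v₁
  rw [hmerge]
  exact l1MinusL2_mergeCoords_lt hab hpos
end

section
/- (Main theorem, part i) Let N > 1, 1 ≤ s < N/2, A ∈ ℝ^{m×N}, and R : ℝ^N → [0,∞) satisfy R(z) = R(|z|), be symmetric (permutation-invariant), concave on the nonnegative orthant, and satisfy condition (R1): R(z_1,…,z_s,z_{s+1},0,…,0) > R(z_1,…,z_s,0,…,0) for all z_1,…,z_{s+1} > 0. If A satisfies the null space property of order s (every nonzero v ∈ ker(A) has ‖v_S‖_1 < ‖v_{S̄}‖_1 for all S with #S ≤ s), then every s-sparse x ∈ ℝ^N is the unique minimizer of R(z) subject to Az = Ax. -/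
open Finset

section helpers
variable {N : ℕ}

private lemma sm_le {k : ℕ} {f : Fin k → Fin N} (hf : StrictMono f) :
    ∀ i : Fin k, (i : ℕ) ≤ (f i : ℕ) := by
  intro i
  induction' hi : (i : ℕ) with n ih generalizing i
  · exact Nat.zero_le _
  · have hn : n < k := by omega
    have h1 : (⟨n, hn⟩ : Fin k) < i := by
      rw [Fin.lt_def]; simp; omega
    have := hf h1
    have h2 := ih ⟨n, hn⟩ (by simp)
    rw [Fin.lt_def] at this
    omega

private def pfx (N k : ℕ) : Finset (Fin N) := univ.filter (fun i => (i : ℕ) < k)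

private lemma card_pfx {k : ℕ} (hk : k ≤ N) : (pfx N k).card = k := by
  classical
  have : pfx N k = (Finset.range k).attachFin (fun m hm => lt_of_lt_of_le (Finset.mem_range.mp hm) hk) := by
    ext i
    simp [pfx, Finset.mem_attachFin]
  rw [this, Finset.card_attachFin, Finset.card_range]

private lemma mem_pfx {k : ℕ} {i : Fin N} : i ∈ pfx N k ↔ (i : ℕ) < k := by
  simp [pfx]

private lemma pfx_eq_image {k : ℕ} (hk : k ≤ N) :
    pfx N k = Finset.image (Fin.castLE hk) univ := by
  ext i
  simp only [mem_pfx, Finset.mem_image, Finset.mem_univ, true_and]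
  constructor
  · intro h; exact ⟨⟨(i : ℕ), h⟩, by ext; simp⟩
  · rintro ⟨j, rfl⟩; simpa using j.isLt

/-- sum over the prefix of a monotone vector is the minimal sum over sets of that card -/
private lemma sum_pfx_le {w : Fin N → ℝ} (hw : Monotone w) {k : ℕ} (hk : k ≤ N)
    (Ω : Finset (Fin N)) (hΩ : Ω.card = k) :
    ∑ i ∈ pfx N k, w i ≤ ∑ i ∈ Ω, w i := by
  classical
  set ι := Ω.orderIsoOfFin hΩ with hιdef
  have h1 : ∑ i ∈ Ω, w i = ∑ i : Fin k, w (ι i : Fin N) := by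
    rw [← Finset.sum_attach Ω (fun i => w i)]
    exact (Equiv.sum_comp ι.toEquiv (fun x => w (x : Fin N))).symm
  have h2 : ∑ i ∈ pfx N k, w i = ∑ i : Fin k, w (Fin.castLE hk i) := by
    rw [pfx_eq_image hk, Finset.sum_image]
    intro a _ b _ hab
    exact Fin.castLE_injective hk hab
  rw [h1, h2]
  apply Finset.sum_le_sum
  intro i _
  apply hw
  have hsm : StrictMono (fun i : Fin k => (ι i : Fin N)) := by
    intro a b hab
    have : ι a < ι b := ι.strictMono hab
    exact this
  have := sm_le hsm i
  rw [Fin.le_def]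
  simpa using this


section rmono
variable {N : ℕ} {R : (Fin N → ℝ) → ℝ}

private lemma Rmono (hRnonneg : ∀ z : Fin N → ℝ, 0 ≤ R z)
    (hconc : ∀ z z' : Fin N → ℝ, (∀ j, 0 ≤ z j) → (∀ j, 0 ≤ z' j) →
      ∀ l : ℝ, 0 ≤ l → l ≤ 1 →
      l * R z + (1 - l) * R z' ≤ R (fun j => l * z j + (1 - l) * z' j))
    {u w : Fin N → ℝ} (hu0 : ∀ j, 0 ≤ u j) (huw : ∀ j, u j ≤ w j) :
    R u ≤ R w := by
  by_contra hcon
  push_neg at hcon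
  have hRu : 0 < R u := lt_of_le_of_lt (hRnonneg w) hcon
  set l : ℝ := (R u - R w) / (2 * R u) with hl
  have hl0 : 0 < l := by
    apply div_pos (by linarith) (by linarith)
  have hl1 : l ≤ 1 := by
    rw [div_le_one (by linarith)]
    have := hRnonneg w
    linarith
  set q : Fin N → ℝ := fun j => u j + (1 / l) * (w j - u j) with hq
  have hq0 : ∀ j, 0 ≤ q j := by
    intro j
    have h1 : 0 ≤ (1 / l) * (w j - u j) := by
      apply mul_nonneg (by positivity) (by linarith [huw j])
    have := hu0 j
    simp only [hq]
    linarith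
  have hkey := hconc q u hq0 hu0 l (le_of_lt hl0) hl1
  have hwq : (fun j => l * q j + (1 - l) * u j) = w := by
    funext j
    simp only [hq]
    field_simp
    ring
  rw [hwq] at hkey
  have hRq : 0 ≤ R q := hRnonneg q
  -- l * R q + (1-l) * R u ≤ R w, but (1-l) * R u > R w
  have h2 : (1 - l) * R u = R u - (R u - R w) / 2 := by
    rw [hl]; field_simp
  nlinarith [hRnonneg w]
end rmono



section hlp
variable {N : ℕ} {R : (Fin N → ℝ) → ℝ}

private lemma hlp_sorted
    (hRnonneg : ∀ z : Fin N → ℝ, 0 ≤ R z)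
    (hsymm : ∀ (π : Equiv.Perm (Fin N)) (z : Fin N → ℝ), R (z ∘ π) = R z)
    (hconc : ∀ z z' : Fin N → ℝ, (∀ j, 0 ≤ z j) → (∀ j, 0 ≤ z' j) →
      ∀ l : ℝ, 0 ≤ l → l ≤ 1 →
      l * R z + (1 - l) * R z' ≤ R (fun j => l * z j + (1 - l) * z' j))
    (Rmono' : ∀ {u w : Fin N → ℝ}, (∀ j, 0 ≤ u j) → (∀ j, u j ≤ w j) → R u ≤ R w)
    {b : Fin N → ℝ} (hbmono : Monotone b) (hb0 : ∀ j, 0 ≤ b j) :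
    ∀ (n : ℕ) (u : Fin N → ℝ), Monotone u → (∀ j, 0 ≤ u j) →
      (∀ k, k ≤ N → ∑ i ∈ pfx N k, u i ≤ ∑ i ∈ pfx N k, b i) →
      (univ.filter (fun i => b i < u i)).card + (univ.filter (fun i => u i < b i)).card ≤ n →
      R u ≤ R b := by
  have base : ∀ u : Fin N → ℝ, (univ.filter (fun i => b i < u i)) = ∅ → (∀ j, 0 ≤ u j) → R u ≤ R b := by
    intro u hH hu0
    apply Rmono' hu0
    intro j
    by_contra hj
    push_neg at hj
    have : j ∈ univ.filter (fun i => b i < u i) := by simp [hj]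
    rw [hH] at this
    exact absurd this (Finset.notMem_empty j)
  intro n
  induction' n with n IH
  · intro u humono hu0 hpre hmeas
    apply base u _ hu0
    have := Finset.card_eq_zero.mp (by omega : (univ.filter (fun i => b i < u i)).card = 0)
    exact this
  intro u humono hu0 hpre hmeas
  by_cases hH : (univ.filter (fun i => b i < u i)) = ∅
  · exact base u hH hu0
  · skip
    have hHne : (univ.filter (fun i => b i < u i)).Nonempty := Finset.nonempty_of_ne_empty hH
    set i₀ : Fin N := (univ.filter (fun i => b i < u i)).min' hHne with hi₀def
    have hi₀mem : i₀ ∈ univ.filter (fun i => b i < u i) := Finset.min'_mem _ _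
    have hi₀ : b i₀ < u i₀ := by simpa using hi₀mem
    have hi₀min : ∀ i, b i < u i → i₀ ≤ i := by
      intro i hi
      exact Finset.min'_le _ _ (by simp [hi])
    -- Jset nonempty
    have hJne : (univ.filter (fun j => u j < b j ∧ j < i₀)).Nonempty := by
      by_contra hJ
      rw [Finset.not_nonempty_iff_eq_empty] at hJ
      have heq : ∀ j : Fin N, j < i₀ → u j = b j := by
        intro j hj
        have h1 : ¬ (u j < b j) := by
          intro hlt
          have : j ∈ univ.filter (fun j => u j < b j ∧ j < i₀) := by simp [hlt, hj]
          rw [hJ] at this; exact absurd this (Finset.notMem_empty j)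
        have h2 : ¬ (b j < u j) := fun hlt => absurd hj (not_lt.mpr (hi₀min j hlt))
        linarith [not_lt.mp h1, not_lt.mp h2]
      have hk : (i₀ : ℕ) + 1 ≤ N := i₀.isLt
      have := hpre ((i₀ : ℕ) + 1) hk
      have hsum : ∑ i ∈ pfx N ((i₀ : ℕ) + 1), (b i - u i) = b i₀ - u i₀ := by
        rw [Finset.sum_eq_single i₀]
        · intro i hi hne
          have hi' : (i : ℕ) < (i₀ : ℕ) + 1 := mem_pfx.mp hi
          have : i < i₀ := by
            rcases lt_or_eq_of_le (Nat.lt_succ_iff.mp hi') with h | h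
            · exact Fin.lt_def.mpr h
            · exact absurd (Fin.ext h) hne
          rw [heq i this]; ring
        · intro h; exact absurd (mem_pfx.mpr (by omega)) h
      rw [Finset.sum_sub_distrib] at hsum
      linarith
    set j₀ : Fin N := (univ.filter (fun j => u j < b j ∧ j < i₀)).max' hJne with hj₀def
    have hj₀mem := Finset.max'_mem _ hJne
    have hj₀lt : u j₀ < b j₀ := by
      have := hj₀mem; simp only [Finset.mem_filter] at this; exact this.2.1
    have hj₀i₀ : j₀ < i₀ := by
      have := hj₀mem; simp only [Finset.mem_filter] at this; exact this.2.2
    have hj₀max : ∀ j, u j < b j → j < i₀ → j ≤ j₀ := by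
      intro j h1 h2
      exact Finset.le_max' _ _ (by simp [h1, h2])
    have hmid : ∀ m : Fin N, j₀ < m → m < i₀ → u m = b m := by
      intro m h1 h2
      have hn1 : ¬ (b m < u m) := fun hlt => absurd h2 (not_lt.mpr (hi₀min m hlt))
      have hn2 : ¬ (u m < b m) := fun hlt => absurd h1 (not_lt.mpr (hj₀max m hlt h2))
      linarith [not_lt.mp hn1, not_lt.mp hn2]
    set δ : ℝ := min (u i₀ - b i₀) (b j₀ - u j₀) with hδdef
    have hδ0 : 0 < δ := lt_min (by linarith) (by linarith)
    have hδ1 : δ ≤ u i₀ - b i₀ := min_le_left _ _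
    have hδ2 : δ ≤ b j₀ - u j₀ := min_le_right _ _
    have hne : j₀ ≠ i₀ := ne_of_lt hj₀i₀
    set u' : Fin N → ℝ := fun i => if i = j₀ then u j₀ + δ else if i = i₀ then u i₀ - δ else u i with hu'def
    have hu'j₀ : u' j₀ = u j₀ + δ := by simp [hu'def]
    have hu'i₀ : u' i₀ = u i₀ - δ := by simp [hu'def, hne.symm]
    have hu'other : ∀ i, i ≠ j₀ → i ≠ i₀ → u' i = u i := by
      intro i h1 h2; simp [hu'def, h1, h2]
    have f1 : u j₀ + δ ≤ b j₀ := by linarith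
    have f3 : b j₀ ≤ b i₀ := hbmono (le_of_lt hj₀i₀)
    have f2 : b i₀ ≤ u i₀ - δ := by linarith
    -- monotone u'
    have hu'mono : Monotone u' := by
      intro i j hij
      rcases eq_or_lt_of_le hij with rfl | hij
      · exact le_refl _
      by_cases hi1 : i = j₀
      · subst hi1
        rw [hu'j₀]
        by_cases hj1 : j = i₀
        · subst hj1; rw [hu'i₀]; linarith
        · rw [hu'other j (ne_of_gt hij) hj1]
          rcases lt_or_ge j i₀ with h | h
          · rw [hmid j hij h]
            linarith [hbmono (le_of_lt hij)]
          · have : i₀ < j := lt_of_le_of_ne h (fun e => hj1 e.symm)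
            have := humono (le_of_lt this)
            linarith
      by_cases hi2 : i = i₀
      · subst hi2
        have hj1 : j ≠ j₀ := fun e => absurd (e ▸ hij) (not_lt.mpr (le_of_lt hj₀i₀))
        by_cases hj2 : j = i₀
        · subst hj2; exact le_refl _
        · rw [hu'i₀, hu'other j hj1 hj2]
          have := humono (le_of_lt hij)
          linarith
      · rw [hu'other i hi1 hi2]
        by_cases hj1 : j = j₀
        · subst hj1
          rw [hu'j₀]
          have := humono (le_of_lt hij)
          linarith
        by_cases hj2 : j = i₀
        · subst hj2
          rw [hu'i₀]
          rcases lt_or_ge i j₀ with h | h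
          · have := humono (le_of_lt h)
            linarith
          · have h' : j₀ < i := lt_of_le_of_ne h (fun e => hi1 e.symm)
            rw [hmid i h' hij]
            have := hbmono (le_of_lt hij)
            linarith
        · rw [hu'other j hj1 hj2]
          exact humono (le_of_lt hij)
    have hu'0 : ∀ j, 0 ≤ u' j := by
      intro i
      by_cases h1 : i = j₀
      · subst h1; rw [hu'j₀]; linarith [hu0 j₀]
      by_cases h2 : i = i₀
      · subst h2; rw [hu'i₀]; linarith [hb0 i₀]
      · rw [hu'other i h1 h2]; exact hu0 i
    -- prefix sums of u'
    have hdiff : ∀ i, u' i - u i = (if i = j₀ then δ else 0) + (if i = i₀ then -δ else 0) := by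
      intro i
      by_cases h1 : i = j₀
      · subst h1; rw [hu'j₀]; simp [hne]
      by_cases h2 : i = i₀
      · subst h2; rw [hu'i₀]; simp [hne.symm, h1]
      · rw [hu'other i h1 h2]; simp [h1, h2]
    have hpre' : ∀ k, k ≤ N → ∑ i ∈ pfx N k, u' i ≤ ∑ i ∈ pfx N k, b i := by
      intro k hk
      have hsumdiff : ∑ i ∈ pfx N k, u' i - ∑ i ∈ pfx N k, u i
          = (if j₀ ∈ pfx N k then δ else 0) + (if i₀ ∈ pfx N k then -δ else 0) := by
        rw [← Finset.sum_sub_distrib]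
        calc ∑ i ∈ pfx N k, (u' i - u i)
            = ∑ i ∈ pfx N k, ((if i = j₀ then δ else 0) + (if i = i₀ then -δ else 0)) := by
              apply Finset.sum_congr rfl; intro i _; exact hdiff i
          _ = _ := by
              rw [Finset.sum_add_distrib, Finset.sum_ite_eq' (pfx N k) j₀ (fun _ => δ),
                Finset.sum_ite_eq' (pfx N k) i₀ (fun _ => (-δ : ℝ))]
      by_cases hjmem : j₀ ∈ pfx N k
      · by_cases himem : i₀ ∈ pfx N k
        · rw [if_pos hjmem, if_pos himem] at hsumdiff
          simp at hsumdiff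
          have := hpre k hk
          linarith
        · -- j₀ < k ≤ i₀ : need δ ≤ ∑ (b - u) over pfx k
          rw [if_pos hjmem, if_neg himem] at hsumdiff
          have hj₀k : (j₀ : ℕ) < k := mem_pfx.mp hjmem
          have hki₀ : k ≤ (i₀ : ℕ) := not_lt.mp (fun h => himem (mem_pfx.mpr h))
          have hsub1 : pfx N ((j₀ : ℕ) + 1) ⊆ pfx N k := by
            intro i hi; exact mem_pfx.mpr (by have := mem_pfx.mp hi; omega)
          have hsplit := Finset.sum_sdiff (f := fun i => b i - u i) hsub1
          have hzero : ∑ i ∈ pfx N k \ pfx N ((j₀ : ℕ) + 1), (b i - u i) = 0 := by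
            apply Finset.sum_eq_zero
            intro i hi
            rw [Finset.mem_sdiff, mem_pfx, mem_pfx] at hi
            have h1 : j₀ < i := by rw [Fin.lt_def]; omega
            have h2 : i < i₀ := by rw [Fin.lt_def]; omega
            rw [hmid i h1 h2]; ring
          have hsub2 : pfx N (j₀ : ℕ) ⊆ pfx N ((j₀ : ℕ) + 1) := by
            intro i hi; exact mem_pfx.mpr (by have := mem_pfx.mp hi; omega)
          have hsplit2 := Finset.sum_sdiff (f := fun i => b i - u i) hsub2
          have hsingle : pfx N ((j₀ : ℕ) + 1) \ pfx N (j₀ : ℕ) = {j₀} := by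
            ext i
            rw [Finset.mem_sdiff, mem_pfx, mem_pfx, Finset.mem_singleton]
            constructor
            · rintro ⟨h1, h2⟩; exact Fin.ext (by omega)
            · rintro rfl; omega
          rw [hsingle, Finset.sum_singleton] at hsplit2
          have hpre_j₀ := hpre (j₀ : ℕ) (le_of_lt j₀.isLt)
          have hfirst : 0 ≤ ∑ i ∈ pfx N (j₀ : ℕ), (b i - u i) := by
            rw [Finset.sum_sub_distrib]; linarith
          have : δ ≤ ∑ i ∈ pfx N k, (b i - u i) := by
            rw [← hsplit, hzero, ← hsplit2]
            linarith
          rw [Finset.sum_sub_distrib] at this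
          linarith
      · -- j₀ ∉ pfx k hence i₀ ∉ pfx k
        have himem : i₀ ∉ pfx N k := by
          intro h
          apply hjmem
          have h1 := mem_pfx.mp h
          have := Fin.lt_def.mp hj₀i₀
          exact mem_pfx.mpr (by omega)
        rw [if_neg hjmem, if_neg himem] at hsumdiff
        have := hpre k hk
        linarith
    -- R u ≤ R u'
    have hd : 0 < u i₀ - u j₀ := by linarith
    set t : ℝ := δ / (u i₀ - u j₀) with htdef
    have ht0 : 0 ≤ t := le_of_lt (div_pos hδ0 hd)
    have ht1 : t ≤ 1 := by
      rw [div_le_one hd]; linarith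
    set σ : Equiv.Perm (Fin N) := Equiv.swap j₀ i₀ with hσdef
    have hkey : u' = fun i => t * (u ∘ σ) i + (1 - t) * u i := by
      funext i
      by_cases h1 : i = j₀
      · subst h1
        rw [hu'j₀]
        simp only [Function.comp_apply, hσdef, Equiv.swap_apply_left]
        rw [htdef]
        field_simp
        ring
      by_cases h2 : i = i₀
      · subst h2
        rw [hu'i₀]
        simp only [Function.comp_apply, hσdef, Equiv.swap_apply_right]
        rw [htdef]
        field_simp
        ring
      · rw [hu'other i h1 h2]
        simp only [Function.comp_apply, hσdef, Equiv.swap_apply_of_ne_of_ne h1 h2]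
        ring
    have huu' : R u ≤ R u' := by
      have hsw0 : ∀ j, 0 ≤ (u ∘ σ) j := fun j => hu0 _
      have hcc := hconc (u ∘ σ) u hsw0 hu0 t ht0 ht1
      rw [hsymm σ u] at hcc
      rw [hkey]
      linarith
    -- measure decrease
    have hsubH : (univ.filter (fun i => b i < u' i)) ⊆ (univ.filter (fun i => b i < u i)) := by
      intro i hi
      rw [Finset.mem_filter] at hi ⊢
      refine ⟨Finset.mem_univ i, ?_⟩
      by_cases h1 : i = j₀
      · subst h1; rw [hu'j₀] at hi; linarith [hi.2]
      by_cases h2 : i = i₀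
      · subst h2; linarith [hi.2]
      · rw [hu'other i h1 h2] at hi; exact hi.2
    have hsubL : (univ.filter (fun i => u' i < b i)) ⊆ (univ.filter (fun i => u i < b i)) := by
      intro i hi
      rw [Finset.mem_filter] at hi ⊢
      refine ⟨Finset.mem_univ i, ?_⟩
      by_cases h1 : i = j₀
      · subst h1; rw [hu'j₀] at hi; linarith [hi.2]
      by_cases h2 : i = i₀
      · subst h2; rw [hu'i₀] at hi; linarith [hi.2]
      · rw [hu'other i h1 h2] at hi; exact hi.2
    have hmeas' : (univ.filter (fun i => b i < u' i)).card + (univ.filter (fun i => u' i < b i)).card ≤ n := by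
      by_cases hcase : u i₀ - b i₀ ≤ b j₀ - u j₀
      · have hδeq : δ = u i₀ - b i₀ := min_eq_left hcase
        have hstrict : (univ.filter (fun i => b i < u' i)) ⊂ (univ.filter (fun i => b i < u i)) := by
          apply Finset.ssubset_iff_of_subset hsubH |>.mpr
          refine ⟨i₀, by simp [hi₀], ?_⟩
          simp only [Finset.mem_filter, Finset.mem_univ, true_and, not_lt]
          rw [hu'i₀, hδeq]; linarith
        have h1 := Finset.card_lt_card hstrict
        have h2 := Finset.card_le_card hsubL
        omega
      · push_neg at hcase
        have hδeq : δ = b j₀ - u j₀ := min_eq_right (le_of_lt hcase)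
        have hstrict : (univ.filter (fun i => u' i < b i)) ⊂ (univ.filter (fun i => u i < b i)) := by
          apply Finset.ssubset_iff_of_subset hsubL |>.mpr
          refine ⟨j₀, by simp [hj₀lt], ?_⟩
          simp only [Finset.mem_filter, Finset.mem_univ, true_and, not_lt]
          rw [hu'j₀, hδeq]; linarith
        have h1 := Finset.card_lt_card hstrict
        have h2 := Finset.card_le_card hsubH
        omega
    exact le_trans huu' (IH u' hu'mono hu'0 hpre' hmeas')
end hlp




section hlpw
variable {N : ℕ} {R : (Fin N → ℝ) → ℝ}

private lemma hlp_main
    (hRnonneg : ∀ z : Fin N → ℝ, 0 ≤ R z)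
    (hsymm : ∀ (π : Equiv.Perm (Fin N)) (z : Fin N → ℝ), R (z ∘ π) = R z)
    (hconc : ∀ z z' : Fin N → ℝ, (∀ j, 0 ≤ z j) → (∀ j, 0 ≤ z' j) →
      ∀ l : ℝ, 0 ≤ l → l ≤ 1 →
      l * R z + (1 - l) * R z' ≤ R (fun j => l * z j + (1 - l) * z' j))
    (Rmono' : ∀ {u w : Fin N → ℝ}, (∀ j, 0 ≤ u j) → (∀ j, u j ≤ w j) → R u ≤ R w)
    {u b : Fin N → ℝ} (hu0 : ∀ j, 0 ≤ u j) (hb0 : ∀ j, 0 ≤ b j)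
    (hcond : ∀ k, k ≤ N → ∃ Ω : Finset (Fin N), Ω.card = k ∧
      ∀ Ω' : Finset (Fin N), Ω'.card = k → ∑ i ∈ Ω, u i ≤ ∑ i ∈ Ω', b i) :
    R u ≤ R b := by
  classical
  set σu := Tuple.sort u with hσu
  set σb := Tuple.sort b with hσb
  have humono : Monotone (u ∘ σu) := Tuple.monotone_sort u
  have hbmono : Monotone (b ∘ σb) := Tuple.monotone_sort b
  have hRu : R (u ∘ σu) = R u := hsymm σu u
  have hRb : R (b ∘ σb) = R b := hsymm σb b
  have hpre : ∀ k, k ≤ N → ∑ i ∈ pfx N k, (u ∘ σu) i ≤ ∑ i ∈ pfx N k, (b ∘ σb) i := by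
    intro k hk
    obtain ⟨Ω, hΩcard, hΩ⟩ := hcond k hk
    have key1 : ∑ i ∈ pfx N k, (u ∘ σu) i ≤ ∑ i ∈ Ω.image σu.symm, (u ∘ σu) i := by
      apply sum_pfx_le humono hk
      rw [Finset.card_image_of_injective _ σu.symm.injective, hΩcard]
    have key2 : ∑ i ∈ Ω.image σu.symm, (u ∘ σu) i = ∑ i ∈ Ω, u i := by
      rw [Finset.sum_image (by intro a _ b _ h; exact σu.symm.injective h)]
      apply Finset.sum_congr rfl
      intro i _
      simp
    have key3 : ∑ i ∈ Ω, u i ≤ ∑ i ∈ (pfx N k).image σb, b i := by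
      apply hΩ
      rw [Finset.card_image_of_injective _ σb.injective, card_pfx hk]
    have key4 : ∑ i ∈ (pfx N k).image σb, b i = ∑ i ∈ pfx N k, (b ∘ σb) i := by
      rw [Finset.sum_image (by intro a _ b _ h; exact σb.injective h)]
      rfl
    rw [key2] at key1
    rw [key4] at key3
    exact le_trans key1 key3
  have := hlp_sorted hRnonneg hsymm hconc (fun {u w} => Rmono') hbmono (fun j => hb0 _)
    ((univ.filter (fun i => (b ∘ σb) i < (u ∘ σu) i)).card + (univ.filter (fun i => (u ∘ σu) i < (b ∘ σb) i)).card)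
    (u ∘ σu) humono (fun j => hu0 _) hpre (le_refl _)
  rw [hRu, hRb] at this
  exact this
end hlpw


private lemma maj_strict {N s : ℕ} {a c b : Fin N → ℝ}
    (hb0 : ∀ j, 0 ≤ b j)
    (hb : ∀ j, |a j - c j| ≤ b j)
    {P : Finset (Fin N)} (hPsupp : ∀ j, j ∉ P → a j = 0) (hPs : P.card ≤ s)
    (hNSPc : ∀ T : Finset (Fin N), T.card ≤ s → ∑ j ∈ T, c j < ∑ j ∈ Tᶜ, c j)
    {Λ : Finset (Fin N)} (hΛ : Λ.card < P.card) :
    ∃ E ⊆ P, E.card = Λ.card ∧ ∑ j ∈ P \ E, a j < ∑ j ∈ Λᶜ, b j := by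
  classical
  set r := Λ.card with hr
  set e₁ := (Λ ∩ P).card with he₁
  have he₁r : e₁ ≤ r := by rw [he₁, hr]; exact Finset.card_le_card Finset.inter_subset_left
  have hcardPΛ : (P \ Λ).card + (P ∩ Λ).card = P.card := Finset.card_sdiff_add_card_inter P Λ
  have hPinter : (P ∩ Λ).card = e₁ := by rw [he₁, Finset.inter_comm]
  have hFle : r - e₁ ≤ (P \ Λ).card := by omega
  obtain ⟨F, hFsub, hFcard⟩ := Finset.exists_subset_card_eq hFle
  set E := (Λ ∩ P) ∪ F with hE
  have hFP : F ⊆ P := hFsub.trans Finset.sdiff_subset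
  have hFΛ : ∀ j ∈ F, j ∉ Λ := fun j hj => (Finset.mem_sdiff.mp (hFsub hj)).2
  have hEP : E ⊆ P := Finset.union_subset Finset.inter_subset_right hFP
  have hdisjEF : Disjoint (Λ ∩ P) F := by
    rw [Finset.disjoint_left]
    intro j hj hjF
    exact hFΛ j hjF (Finset.mem_inter.mp hj).1
  have hEcard : E.card = r := by
    rw [hE, Finset.card_union_of_disjoint hdisjEF, hFcard, Finset.inter_comm] at *
    omega
  refine ⟨E, hEP, hEcard, ?_⟩
  -- the three disjoint pieces of Λᶜ
  set S1 := P \ E with hS1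
  set S3 := (P ∪ Λ)ᶜ with hS3
  have hS1eq : S1 = (P \ Λ) \ F := by
    rw [hS1, hE]
    ext j
    simp only [Finset.mem_sdiff, Finset.mem_union, Finset.mem_inter]
    tauto
  have hd12 : Disjoint S1 F := by
    rw [hS1eq, Finset.disjoint_left]
    intro j hj
    exact (Finset.mem_sdiff.mp hj).2
  have hd13 : Disjoint S1 S3 := by
    rw [Finset.disjoint_left]
    intro j hj hj3
    rw [hS3, Finset.mem_compl, Finset.mem_union] at hj3
    exact hj3 (Or.inl (Finset.mem_sdiff.mp hj).1)
  have hd23 : Disjoint F S3 := by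
    rw [Finset.disjoint_left]
    intro j hj hj3
    rw [hS3, Finset.mem_compl, Finset.mem_union] at hj3
    exact hj3 (Or.inl (hFP hj))
  have hsubΛc : S1 ∪ F ∪ S3 ⊆ Λᶜ := by
    intro j hj
    rw [Finset.mem_union, Finset.mem_union] at hj
    rw [Finset.mem_compl]
    rcases hj with (hj | hj) | hj
    · rw [hS1eq] at hj
      exact (Finset.mem_sdiff.mp (Finset.mem_sdiff.mp hj).1).2
    · exact hFΛ j hj
    · rw [hS3, Finset.mem_compl, Finset.mem_union] at hj
      tauto
  have hsplit : ∑ j ∈ S1, b j + ∑ j ∈ F, b j + ∑ j ∈ S3, b j ≤ ∑ j ∈ Λᶜ, b j := by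
    rw [← Finset.sum_union hd12, ← Finset.sum_union (Finset.disjoint_union_left.mpr ⟨hd13, hd23⟩)]
    apply Finset.sum_le_sum_of_subset_of_nonneg hsubΛc
    intro j _ _
    exact hb0 j
  -- pointwise bounds
  have hbS1 : ∑ j ∈ S1, (a j - c j) ≤ ∑ j ∈ S1, b j :=
    Finset.sum_le_sum (fun j _ => le_trans (le_abs_self _) (hb j))
  have hbF : ∑ j ∈ F, (c j - a j) ≤ ∑ j ∈ F, b j :=
    Finset.sum_le_sum (fun j _ => le_trans (by rw [← neg_sub]; exact neg_le_abs _) (hb j))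
  have hbS3 : ∑ j ∈ S3, c j ≤ ∑ j ∈ S3, b j := by
    apply Finset.sum_le_sum
    intro j hj
    have ha : a j = 0 := hPsupp j (fun hjP => by
      rw [hS3, Finset.mem_compl, Finset.mem_union] at hj; exact hj (Or.inl hjP))
    have h1 : c j - a j ≤ b j := le_trans (by rw [← neg_sub]; exact neg_le_abs _) (hb j)
    rw [ha, sub_zero] at h1
    exact h1
  rw [Finset.sum_sub_distrib] at hbS1 hbF
  rcases le_or_gt (∑ j ∈ F, a j) (∑ j ∈ Λ, c j) with hcase | hcase
  · -- Case A
    set T := Λ ∪ S1 with hT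
    have hdTdisj : Disjoint Λ S1 := by
      rw [Finset.disjoint_left]
      intro j hj hj1
      rw [hS1eq] at hj1
      exact (Finset.mem_sdiff.mp (Finset.mem_sdiff.mp hj1).1).2 hj
    have hS1card : S1.card = P.card - r := by
      rw [hS1, Finset.card_sdiff_of_subset hEP, hEcard]
    have hTcard : T.card ≤ s := by
      rw [hT, Finset.card_union_of_disjoint hdTdisj, hS1card]
      omega
    have hTc : Tᶜ = S3 ∪ F := by
      rw [hT, hS3]
      ext j
      simp only [Finset.mem_compl, Finset.mem_union, Finset.mem_sdiff, hS1, hE,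
        Finset.mem_inter, Finset.mem_union]
      by_cases hjP : j ∈ P <;> by_cases hjΛ : j ∈ Λ <;> by_cases hjF : j ∈ F <;>
        simp [hjP, hjΛ, hjF] <;> tauto
    have hnsp := hNSPc T hTcard
    rw [hTc, Finset.sum_union hd23.symm, hT, Finset.sum_union hdTdisj] at hnsp
    linarith
  · -- Case B
    have hPΛcard : (P \ Λ).card ≤ s := le_trans (Finset.card_le_card Finset.sdiff_subset) hPs
    have hnsp := hNSPc (P \ Λ) hPΛcard
    have hcompl : (P \ Λ)ᶜ = S3 ∪ Λ := by
      rw [hS3]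
      ext j
      simp only [Finset.mem_compl, Finset.mem_union, Finset.mem_sdiff]
      by_cases hjP : j ∈ P <;> by_cases hjΛ : j ∈ Λ <;> simp [hjP, hjΛ]
    have hd3Λ : Disjoint S3 Λ := by
      rw [Finset.disjoint_left]
      intro j hj hjΛ
      rw [hS3, Finset.mem_compl, Finset.mem_union] at hj
      exact hj (Or.inr hjΛ)
    rw [hcompl, Finset.sum_union hd3Λ] at hnsp
    have hsplitPΛ : P \ Λ = S1 ∪ F := by
      rw [hS1eq]
      ext j
      simp only [Finset.mem_union, Finset.mem_sdiff]
      by_cases hjF : j ∈ F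
      · simp [hjF, Finset.mem_sdiff.mp (hFsub hjF)]
      · simp [hjF]
    rw [hsplitPΛ, Finset.sum_union hd12] at hnsp
    have hbF' : ∑ j ∈ F, (a j - c j) ≤ ∑ j ∈ F, b j :=
      Finset.sum_le_sum (fun j _ => le_trans (le_abs_self _) (hb j))
    rw [Finset.sum_sub_distrib] at hbF'
    linarith


private lemma perm_exists {N s : ℕ} (hsN : s + 1 ≤ N)
    (Q : Finset (Fin N)) (hQcard : Q.card = s) (jstar : Fin N) (hjQ : jstar ∉ Q) :
    ∃ σ : Equiv.Perm (Fin N),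
      (∀ i : Fin N, (i : ℕ) < s → σ i ∈ Q) ∧
      (σ ⟨s, hsN⟩ = jstar) ∧
      (∀ i : Fin N, s < (i : ℕ) → (σ i ∉ Q ∧ σ i ≠ jstar)) := by
  classical
  set U : Finset (Fin N) := insert jstar Q with hU
  have hUcard : U.card = s + 1 := by
    rw [hU, Finset.card_insert_of_notMem hjQ, hQcard]
  set L : List (Fin N) := Q.sort (· ≤ ·) ++ jstar :: (Uᶜ.sort (· ≤ ·)) with hL
  have hlenQ : (Q.sort (· ≤ ·)).length = s := by rw [Finset.length_sort, hQcard]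
  have hlenC : (Uᶜ.sort (· ≤ ·)).length = N - (s + 1) := by
    rw [Finset.length_sort, Finset.card_compl, hUcard, Fintype.card_fin]
  have hlen : L.length = N := by
    rw [hL, List.length_append, hlenQ, List.length_cons, hlenC]
    omega
  have hnd : L.Nodup := by
    rw [hL]
    apply List.Nodup.append (Finset.sort_nodup _ _)
    · apply List.Nodup.cons
      · intro hmem
        rw [Finset.mem_sort] at hmem
        rw [Finset.mem_compl] at hmem
        exact hmem (Finset.mem_insert_self _ _)
      · exact Finset.sort_nodup _ _
    · intro x hx hx2
      rw [Finset.mem_sort] at hx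
      rcases List.mem_cons.mp hx2 with rfl | hx2
      · exact hjQ hx
      · rw [Finset.mem_sort, Finset.mem_compl] at hx2
        exact hx2 (Finset.mem_insert_of_mem hx)
  have hmem : ∀ x : Fin N, x ∈ L := by
    intro x
    rw [hL, List.mem_append, List.mem_cons]
    by_cases h1 : x ∈ Q
    · exact Or.inl (by rwa [Finset.mem_sort])
    · by_cases h2 : x = jstar
      · exact Or.inr (Or.inl h2)
      · refine Or.inr (Or.inr ?_)
        rw [Finset.mem_sort, Finset.mem_compl, hU, Finset.mem_insert]
        tauto
  set e := List.Nodup.getEquivOfForallMemList L hnd hmem with he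
  set σ : Equiv.Perm (Fin N) := (finCongr hlen.symm).trans e with hσ
  have happ : ∀ i : Fin N, σ i = L.get (finCongr hlen.symm i) := fun i => rfl
  have hget : ∀ i : Fin N, σ i = L[(i : ℕ)]'(by rw [hlen]; exact i.isLt) := by
    intro i; rw [happ]; rfl
  refine ⟨σ, ?_, ?_, ?_⟩
  · intro i hi
    rw [hget]
    have h1 : (i : ℕ) < (Q.sort (· ≤ ·)).length := by rw [hlenQ]; exact hi
    have key : L[(i : ℕ)]'(by rw [hlen]; exact i.isLt) = (Q.sort (· ≤ ·))[(i:ℕ)]'h1 :=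
      List.getElem_append_left h1
    rw [key]
    have : (Q.sort (· ≤ ·))[(i:ℕ)] ∈ Q.sort (· ≤ ·) := List.getElem_mem _
    rwa [Finset.mem_sort] at this
  · rw [hget]
    have key : L[(s : ℕ)]'(by rw [hlen]; omega)
        = (jstar :: (Uᶜ.sort (· ≤ ·)))[s - (Q.sort (· ≤ ·)).length]'(by
            simp only [List.length_cons, hlenC, hlenQ]; omega) :=
      List.getElem_append_right (by rw [hlenQ])
    have h0 : s - (Q.sort (· ≤ ·)).length = 0 := by rw [hlenQ]; omega
    simp only [h0, List.getElem_cons_zero] at key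
    exact key
  · intro i hi
    rw [hget]
    have h2 : (i : ℕ) - (Q.sort (· ≤ ·)).length = ((i:ℕ) - s - 1) + 1 := by
      rw [hlenQ]; omega
    have hlt : (i:ℕ) - s - 1 < (Uᶜ.sort (· ≤ ·)).length := by
      rw [hlenC]; omega
    have key : L[(i : ℕ)]'(by rw [hlen]; exact i.isLt)
        = (jstar :: (Uᶜ.sort (· ≤ ·)))[(i : ℕ) - (Q.sort (· ≤ ·)).length]'(by
            simp only [List.length_cons, hlenC, hlenQ]; omega) :=
      List.getElem_append_right (by rw [hlenQ]; omega)
    have key2 : (jstar :: (Uᶜ.sort (· ≤ ·)))[(i : ℕ) - (Q.sort (· ≤ ·)).length]'(by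
            simp only [List.length_cons, hlenC, hlenQ]; omega)
        = (Uᶜ.sort (· ≤ ·))[(i:ℕ) - s - 1]'hlt := by
      simp only [h2]
      rw [List.getElem_cons_succ]
    rw [key, key2]
    have hmem2 : (Uᶜ.sort (· ≤ ·))[(i:ℕ) - s - 1] ∈ Uᶜ.sort (· ≤ ·) := List.getElem_mem _
    rw [Finset.mem_sort, Finset.mem_compl] at hmem2
    constructor
    · intro hQmem
      exact hmem2 (Finset.mem_insert_of_mem hQmem)
    · intro heq
      exact hmem2 (by rw [heq]; exact Finset.mem_insert_self _ _)


/-- Main theorem, part (i): let `N > 1`, `1 ≤ s < N/2`, `A ∈ ℝ^{m×N}`, and let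
`R : ℝ^N → [0,∞)` be componentwise-even, symmetric (permutation-invariant),
concave on the nonnegative orthant, and satisfy condition (R1): for every
vector supported on the first `s+1` coordinates with positive entries there,
dropping the `(s+1)`-th entry strictly decreases `R`.  If `A` satisfies the
null space property of order `s`, then every `s`-sparse `x` is the unique
minimizer of `R z` subject to `A z = A x`. -/
theorem main_theorem_part_i (m N s : ℕ) (hN : 1 < N) (hs : 1 ≤ s)
    (hsN : 2 * s < N)
    (A : Matrix (Fin m) (Fin N) ℝ)
    (R : (Fin N → ℝ) → ℝ)
    (hRnonneg : ∀ z : Fin N → ℝ, 0 ≤ R z)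
    (habs : ∀ z : Fin N → ℝ, R z = R (fun j => |z j|))
    (hsymm : ∀ (π : Equiv.Perm (Fin N)) (z : Fin N → ℝ), R (z ∘ π) = R z)
    (hconc : ∀ z z' : Fin N → ℝ, (∀ j, 0 ≤ z j) → (∀ j, 0 ≤ z' j) →
      ∀ l : ℝ, 0 ≤ l → l ≤ 1 →
      l * R z + (1 - l) * R z' ≤ R (fun j => l * z j + (1 - l) * z' j))
    -- condition (R1)
    (hR1 : ∀ z : Fin N → ℝ, (∀ j : Fin N, (j : ℕ) < s + 1 → 0 < z j) →
      (∀ j : Fin N, s + 1 ≤ (j : ℕ) → z j = 0) →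
      R (fun j => if (j : ℕ) < s then z j else 0) < R z)
    -- null space property of order s
    (hNSP : ∀ v : Fin N → ℝ, A.mulVec v = 0 → v ≠ 0 →
      ∀ S : Finset (Fin N), S.card ≤ s →
        ∑ j ∈ S, |v j| < ∑ j ∈ Sᶜ, |v j|) :
    ∀ x : Fin N → ℝ,
      (∃ S : Finset (Fin N), S.card ≤ s ∧ ∀ j ∉ S, x j = 0) →
      ∀ z : Fin N → ℝ, A.mulVec z = A.mulVec x → z ≠ x → R x < R z := by
  classical
  intro x hx z hAz hzx
  obtain ⟨S, hScard, hSsupp⟩ := hx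
  have hs1N : s + 1 ≤ N := by omega
  set a : Fin N → ℝ := fun j => |x j| with ha
  set b : Fin N → ℝ := fun j => |z j| with hbdef
  set c : Fin N → ℝ := fun j => |z j - x j| with hc
  have ha0 : ∀ j, 0 ≤ a j := fun j => abs_nonneg _
  have hb0 : ∀ j, 0 ≤ b j := fun j => abs_nonneg _
  have hc0 : ∀ j, 0 ≤ c j := fun j => abs_nonneg _
  -- NSP for c
  have hker : A.mulVec (z - x) = 0 := by rw [Matrix.mulVec_sub, hAz, sub_self]
  have hvne : z - x ≠ 0 := sub_ne_zero_of_ne hzx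
  have hNSPc : ∀ T : Finset (Fin N), T.card ≤ s → ∑ j ∈ T, c j < ∑ j ∈ Tᶜ, c j := by
    intro T hT
    have h := hNSP (z - x) hker hvne T hT
    simpa [hc, Pi.sub_apply] using h
  -- support of x
  set P : Finset (Fin N) := univ.filter (fun j => x j ≠ 0) with hP
  set p : ℕ := P.card with hpdef
  have hPsupp : ∀ j, j ∉ P → a j = 0 := by
    intro j hj
    rw [hP] at hj
    simp only [Finset.mem_filter, Finset.mem_univ, true_and, not_not] at hj
    rw [ha]; simp [hj]
  have haP : ∀ j ∈ P, 0 < a j := by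
    intro j hj
    rw [hP] at hj
    simp only [Finset.mem_filter, Finset.mem_univ, true_and] at hj
    rw [ha]; simpa using hj
  have hps : p ≤ s := by
    rw [hpdef]
    refine le_trans (Finset.card_le_card ?_) hScard
    intro j hj
    rw [hP] at hj
    simp only [Finset.mem_filter, Finset.mem_univ, true_and] at hj
    by_contra hjS
    exact hj (hSsupp j hjS)
  -- b dominates |a - c|
  have hbac : ∀ j, |a j - c j| ≤ b j := by
    intro j
    have h1 := abs_abs_sub_abs_le_abs_sub (x j) (x j - z j)
    have h2 : x j - (x j - z j) = z j := by ring
    rw [h2, abs_sub_comm (x j) (z j)] at h1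
    exact h1
  -- V : s+1 coordinates off P where c > 0
  have hVex : s + 1 ≤ ((univ.filter (fun j => c j ≠ 0)) \ P).card := by
    by_contra hcon
    push_neg at hcon
    set T1 := (univ.filter (fun j => c j ≠ 0)) \ P with hT1
    have h1 := hNSPc T1 (by omega)
    have h2 := hNSPc P hps
    have key1 : ∑ j ∈ T1ᶜ, c j ≤ ∑ j ∈ P, c j := by
      rw [← Finset.sum_sdiff (Finset.inter_subset_left : T1ᶜ ∩ P ⊆ T1ᶜ)]
      have hz : ∑ j ∈ T1ᶜ \ (T1ᶜ ∩ P), c j = 0 := by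
        apply Finset.sum_eq_zero
        intro j hj
        rw [Finset.mem_sdiff, Finset.mem_inter, Finset.mem_compl] at hj
        have hjP : j ∉ P := fun h => hj.2 ⟨hj.1, h⟩
        by_contra hc_ne
        exact hj.1 (by rw [hT1, Finset.mem_sdiff]; exact ⟨by simp [hc_ne], hjP⟩)
      rw [hz, zero_add]
      apply Finset.sum_le_sum_of_subset_of_nonneg Finset.inter_subset_right
      intro j _ _; exact hc0 j
    have key2 : ∑ j ∈ Pᶜ, c j = ∑ j ∈ T1, c j := by
      rw [← Finset.sum_sdiff (show T1 ⊆ Pᶜ by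
        intro j hj; rw [hT1, Finset.mem_sdiff] at hj; rw [Finset.mem_compl]; exact hj.2)]
      have hz : ∑ j ∈ Pᶜ \ T1, c j = 0 := by
        apply Finset.sum_eq_zero
        intro j hj
        rw [Finset.mem_sdiff, Finset.mem_compl] at hj
        by_contra hc_ne
        exact hj.2 (by rw [hT1, Finset.mem_sdiff]; exact ⟨by simp [hc_ne], hj.1⟩)
      rw [hz, zero_add]
    linarith
  obtain ⟨V, hVsub, hVcard⟩ := Finset.exists_subset_card_eq hVex
  have hVP : ∀ j ∈ V, j ∉ P := by
    intro j hj
    exact (Finset.mem_sdiff.mp (hVsub hj)).2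
  have hVpos : ∀ j ∈ V, 0 < c j := by
    intro j hj
    have := (Finset.mem_sdiff.mp (hVsub hj)).1
    simp only [Finset.mem_filter, Finset.mem_univ, true_and] at this
    exact lt_of_le_of_ne (hc0 j) (Ne.symm this)
  have hbV : ∀ j ∈ V, c j ≤ b j := by
    intro j hj
    have h1 := hbac j
    rw [hPsupp j (hVP j hj), zero_sub, abs_neg, abs_of_nonneg (hc0 j)] at h1
    exact h1
  have hVne : V.Nonempty := by
    rw [← Finset.card_pos, hVcard]; omega
  obtain ⟨j₁, hj₁V, hj₁min⟩ := Finset.exists_min_image V b hVne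
  set β₀ : ℝ := b j₁ with hβ₀
  have hβ₀pos : 0 < β₀ := lt_of_lt_of_le (hVpos j₁ hj₁V) (hbV j₁ hj₁V)
  have hβ₀le : ∀ j ∈ V, β₀ ≤ b j := hj₁min
  -- W and jstar
  obtain ⟨W, hWV, hWcard⟩ := Finset.exists_subset_card_eq
    (show s - p ≤ V.card by rw [hVcard]; omega)
  have hVWne : (V \ W).Nonempty := by
    rw [← Finset.card_pos, Finset.card_sdiff_of_subset hWV, hVcard, hWcard]; omega
  obtain ⟨jstar, hjstar⟩ := hVWne
  have hjV : jstar ∈ V := (Finset.mem_sdiff.mp hjstar).1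
  have hjW : jstar ∉ W := (Finset.mem_sdiff.mp hjstar).2
  set Q : Finset (Fin N) := P ∪ W with hQ
  have hWP : ∀ j ∈ W, j ∉ P := fun j hj => hVP j (hWV hj)
  have hQcard : Q.card = s := by
    rw [hQ, Finset.card_union_of_disjoint (by
      rw [Finset.disjoint_right]; exact hWP), hWcard, ← hpdef]
    omega
  have hjQ : jstar ∉ Q := by
    rw [hQ, Finset.mem_union]
    push_neg
    exact ⟨hVP jstar hjV, hjW⟩
  -- TopSum
  set TopSum : ℕ → ℝ := fun r =>
    if h : r ≤ N then
      (((Finset.powersetCard r (univ : Finset (Fin N))).image (fun E => ∑ j ∈ E, a j)).max'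
        (Finset.Nonempty.image (Finset.powersetCard_nonempty.mpr (by simpa using h)) _))
    else 0 with hTopSum
  have hTopSum_ge : ∀ (E : Finset (Fin N)), E.card ≤ N → ∑ j ∈ E, a j ≤ TopSum E.card := by
    intro E hE
    rw [hTopSum]
    simp only [dif_pos hE]
    apply Finset.le_max'
    exact Finset.mem_image_of_mem _ (Finset.mem_powersetCard.mpr ⟨Finset.subset_univ E, rfl⟩)
  have hTopSum_ex : ∀ r : ℕ, r ≤ N → ∃ E : Finset (Fin N), E.card = r ∧ ∑ j ∈ E, a j = TopSum r := by
    intro r hr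
    rw [hTopSum]
    simp only [dif_pos hr]
    have hmem := Finset.max'_mem
      (((Finset.powersetCard r (univ : Finset (Fin N))).image (fun E => ∑ j ∈ E, a j)))
      (Finset.Nonempty.image (Finset.powersetCard_nonempty.mpr (by simpa using hr)) _)
    rw [Finset.mem_image] at hmem
    obtain ⟨E, hEmem, hEeq⟩ := hmem
    exact ⟨E, (Finset.mem_powersetCard.mp hEmem).2, hEeq⟩
  have hsum_aP : ∑ j ∈ P, a j = ∑ j ∈ univ, a j :=
    Finset.sum_subset (Finset.subset_univ P) (fun j _ hj => hPsupp j hj)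
  -- family of small sets and the margin
  set Λfam : Finset (Finset (Fin N)) :=
    insert ∅ ((Finset.range p).biUnion (fun r => Finset.powersetCard r (univ : Finset (Fin N)))) with hΛfam
  set margin : Finset (Fin N) → ℝ := fun Λ => ∑ j ∈ Λᶜ, b j - ∑ j ∈ univ, a j + TopSum Λ.card
    with hmargin
  have hmarginpos : ∀ Λ ∈ Λfam, 0 < margin Λ := by
    intro Λ hΛ
    by_cases hcard : Λ.card < p
    · obtain ⟨E, hEP, hEcard, hEsum⟩ := maj_strict hb0 hbac hPsupp hps hNSPc hcard
      have h1 : ∑ j ∈ P \ E, a j = ∑ j ∈ univ, a j - ∑ j ∈ E, a j := by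
        rw [← hsum_aP, Finset.sum_sdiff_eq_sub hEP]
      have h2 : ∑ j ∈ E, a j ≤ TopSum Λ.card := by
        rw [← hEcard]
        exact hTopSum_ge E (le_trans (Finset.card_le_card (Finset.subset_univ E)) (by simp))
      rw [hmargin]
      simp only []
      rw [h1] at hEsum
      linarith
    · -- then Λ = ∅ and p = 0
      have hΛ0 : Λ = ∅ := by
        rw [hΛfam, Finset.mem_insert] at hΛ
        rcases hΛ with rfl | hΛ
        · rfl
        · exfalso
          rw [Finset.mem_biUnion] at hΛ
          obtain ⟨r, hr, hΛr⟩ := hΛ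
          rw [Finset.mem_range] at hr
          rw [(Finset.mem_powersetCard.mp hΛr).2] at hcard
          omega
      have hp0 : p = 0 := by
        subst hΛ0
        simp at hcard
        omega
      have hP0 : P = ∅ := Finset.card_eq_zero.mp hp0
      have ha_zero : ∀ j, a j = 0 := fun j => hPsupp j (by rw [hP0]; exact Finset.notMem_empty j)
      have hsuma : ∑ j ∈ univ, a j = 0 := Finset.sum_eq_zero (fun j _ => ha_zero j)
      have hT0 : TopSum Λ.card = 0 := by
        subst hΛ0
        simp only [Finset.card_empty]
        rw [hTopSum]
        simp only [dif_pos (Nat.zero_le N)]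
        apply le_antisymm
        · apply Finset.max'_le
          intro y hy
          rw [Finset.mem_image] at hy
          obtain ⟨E, _, rfl⟩ := hy
          exact le_of_eq (Finset.sum_eq_zero (fun j _ => ha_zero j))
        · apply Finset.le_max'
          rw [Finset.mem_image]
          exact ⟨∅, by simp, by simp⟩
      have hbc : 0 < ∑ j ∈ Λᶜ, b j := by
        subst hΛ0
        have h1 := hNSPc ∅ (by simp)
        simp only [Finset.sum_empty] at h1
        have h2 : ∑ j ∈ (∅ : Finset (Fin N))ᶜ, c j ≤ ∑ j ∈ (∅ : Finset (Fin N))ᶜ, b j := by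
          apply Finset.sum_le_sum
          intro j _
          have := hbac j
          rw [ha_zero j, zero_sub, abs_neg, abs_of_nonneg (hc0 j)] at this
          exact this
        linarith
      rw [hmargin]
      simp only []
      rw [hsuma, hT0]
      linarith
  have hΛfamne : Λfam.Nonempty := ⟨∅, by rw [hΛfam]; exact Finset.mem_insert_self _ _⟩
  set δ₀ : ℝ := (Λfam.image margin).min' (hΛfamne.image margin) with hδ₀
  have hδ₀pos : 0 < δ₀ := by
    have hmem := Finset.min'_mem (Λfam.image margin) (hΛfamne.image margin)
    rw [Finset.mem_image] at hmem
    obtain ⟨Λ, hΛ, hΛeq⟩ := hmem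
    rw [hδ₀, ← hΛeq]
    exact hmarginpos Λ hΛ
  have hδ₀le : ∀ Λ ∈ Λfam, δ₀ ≤ margin Λ := by
    intro Λ hΛ
    exact Finset.min'_le _ _ (Finset.mem_image_of_mem margin hΛ)
  set ε : ℝ := min β₀ (δ₀ / (s + 1)) with hε
  have hε0 : 0 < ε := lt_min hβ₀pos (by positivity)
  have hεβ : ε ≤ β₀ := min_le_left _ _
  have hεδ : (s + 1 : ℝ) * ε ≤ δ₀ := by
    have h1 : ε ≤ δ₀ / (s+1) := min_le_right _ _
    rw [le_div_iff₀ (by positivity)] at h1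
    linarith
  -- the padded vector
  set Wstar : Finset (Fin N) := insert jstar W with hWstar
  set Ufin : Finset (Fin N) := insert jstar Q with hUfin
  have hWstarcard : Wstar.card = s - p + 1 := by
    rw [hWstar, Finset.card_insert_of_notMem hjW, hWcard]
  have hUfincard : Ufin.card = s + 1 := by
    rw [hUfin, Finset.card_insert_of_notMem hjQ, hQcard]
  have hWstarP : ∀ j ∈ Wstar, j ∉ P := by
    intro j hj
    rw [hWstar, Finset.mem_insert] at hj
    rcases hj with rfl | hj
    · exact hVP j hjV
    · exact hWP j hj
  have hWstarUfin : Wstar ⊆ Ufin := by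
    intro j hj
    rw [hWstar, Finset.mem_insert] at hj
    rw [hUfin, Finset.mem_insert]
    rcases hj with rfl | hj
    · exact Or.inl rfl
    · exact Or.inr (by rw [hQ, Finset.mem_union]; exact Or.inr hj)
  have hPUfin : P ⊆ Ufin := by
    intro j hj
    rw [hUfin, Finset.mem_insert]
    exact Or.inr (by rw [hQ, Finset.mem_union]; exact Or.inl hj)
  set atld : Fin N → ℝ := fun j => a j + (if j ∈ Wstar then ε else 0) with hatld
  set g : Fin N → ℝ := fun j => a j + (if j ∈ W then ε else 0) with hg
  have hatld0 : ∀ j, 0 ≤ atld j := by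
    intro j
    rw [hatld]
    have := ha0 j
    by_cases hj : j ∈ Wstar <;> simp [hj] <;> linarith
  have hatldsupp : ∀ j, j ∉ Ufin → atld j = 0 := by
    intro j hj
    have h1 : j ∉ P := fun h => hj (hPUfin h)
    have h2 : j ∉ Wstar := fun h => hj (hWstarUfin h)
    rw [hatld]
    simp [h2, hPsupp j h1]
  -- Step 1 : R a ≤ R g
  have step1 : R a ≤ R g := by
    apply Rmono hRnonneg hconc ha0
    intro j
    rw [hg]
    by_cases hj : j ∈ W <;> simp [hj] <;> linarith [hε0]
  -- Step 2 : R g < R atld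
  have step2 : R g < R atld := by
    obtain ⟨σ, hσ1, hσ2, hσ3⟩ := perm_exists hs1N Q hQcard jstar hjQ
    have hpos : ∀ i : Fin N, (i : ℕ) < s + 1 → 0 < atld (σ i) := by
      intro i hi
      by_cases his : (i : ℕ) < s
      · have hσQ := hσ1 i his
        rw [hQ, Finset.mem_union] at hσQ
        rcases hσQ with h | h
        · have := haP _ h
          rw [hatld]
          by_cases hw : σ i ∈ Wstar <;> simp [hw] <;> linarith
        · have hw : σ i ∈ Wstar := by rw [hWstar, Finset.mem_insert]; exact Or.inr h
          rw [hatld]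
          simp [hw]
          have := ha0 (σ i)
          linarith
      · have hieq : i = ⟨s, hs1N⟩ := Fin.ext (by show (i:ℕ) = s; omega)
        rw [hieq, hσ2]
        have hw : jstar ∈ Wstar := by rw [hWstar]; exact Finset.mem_insert_self _ _
        rw [hatld]
        simp [hw]
        have := ha0 jstar
        linarith
    have hzero : ∀ i : Fin N, s + 1 ≤ (i : ℕ) → atld (σ i) = 0 := by
      intro i hi
      obtain ⟨hnQ, hnj⟩ := hσ3 i (by omega)
      apply hatldsupp
      rw [hUfin, Finset.mem_insert]
      push_neg
      exact ⟨hnj, hnQ⟩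
    have hR1app := hR1 (fun i => atld (σ i)) hpos hzero
    have htrunc : (fun i : Fin N => if (i : ℕ) < s then atld (σ i) else 0) = fun i => g (σ i) := by
      funext i
      by_cases hi : (i : ℕ) < s
      · simp only [if_pos hi]
        have hσQ := hσ1 i hi
        have hnj : σ i ≠ jstar := by
          intro h
          rw [h] at hσQ
          exact hjQ hσQ
        rw [hatld, hg]
        simp only []
        congr 1
        have : σ i ∈ Wstar ↔ σ i ∈ W := by
          rw [hWstar, Finset.mem_insert]
          constructor
          · rintro (h | h)
            · exact absurd h hnj
            · exact h
          · exact Or.inr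
        by_cases hw : σ i ∈ W
        · simp [hw, this.mpr hw]
        · have hw2 : σ i ∉ Wstar := fun h => hw (this.mp h)
          simp [hw, hw2]
      · simp only [if_neg hi]
        by_cases hieq : (i : ℕ) = s
        · have : i = ⟨s, hs1N⟩ := Fin.ext hieq
          rw [this, hσ2, hg]
          have h1 : jstar ∉ P := hVP jstar hjV
          simp [hjW, hPsupp jstar h1]
        · obtain ⟨hnQ, hnj⟩ := hσ3 i (by omega)
          have h1 : σ i ∉ P := fun h => hnQ (by rw [hQ, Finset.mem_union]; exact Or.inl h)
          have h2 : σ i ∉ W := fun h => hnQ (by rw [hQ, Finset.mem_union]; exact Or.inr h)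
          rw [hg]
          simp [h2, hPsupp _ h1]
    rw [htrunc] at hR1app
    have e1 : R (fun i => g (σ i)) = R g := hsymm σ g
    have e2 : R (fun i => atld (σ i)) = R atld := hsymm σ atld
    rw [e1, e2] at hR1app
    exact hR1app
  -- Step 3 : R atld ≤ R b
  have step3 : R atld ≤ R b := by
    apply hlp_main hRnonneg hsymm hconc
      (fun {u w} hu huw => Rmono hRnonneg hconc hu huw) hatld0 hb0
    intro k hk
    set r : ℕ := N - k with hrdef
    have hrk : r + k = N := by omega
    by_cases h1 : s + 1 ≤ r
    · -- large complement: atld restricted to Ω is 0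
      obtain ⟨Ω, hΩsub, hΩcard⟩ := Finset.exists_subset_card_eq
        (show k ≤ (Ufinᶜ).card by
          rw [Finset.card_compl, hUfincard, Fintype.card_fin]; omega)
      refine ⟨Ω, hΩcard, ?_⟩
      intro Ω' hΩ'
      have hz : ∑ j ∈ Ω, atld j = 0 := by
        apply Finset.sum_eq_zero
        intro j hj
        exact hatldsupp j (Finset.mem_compl.mp (hΩsub hj))
      rw [hz]
      exact Finset.sum_nonneg (fun j _ => hb0 j)
    · by_cases h2 : p ≤ r
      · -- middle range
        push_neg at h1
        obtain ⟨W1, hW1sub, hW1card⟩ := Finset.exists_subset_card_eq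
          (show r - p ≤ Wstar.card by rw [hWstarcard]; omega)
        set Λ : Finset (Fin N) := P ∪ W1 with hΛdef
        have hPW1disj : Disjoint P W1 := by
          rw [Finset.disjoint_right]
          intro j hj
          exact hWstarP j (hW1sub hj)
        have hΛcard : Λ.card = r := by
          rw [hΛdef, Finset.card_union_of_disjoint hPW1disj, hW1card, ← hpdef]
          omega
        refine ⟨Λᶜ, by rw [Finset.card_compl, hΛcard, Fintype.card_fin]; omega, ?_⟩
        intro Ω' hΩ'
        -- LHS
        have hLa : ∑ j ∈ Λᶜ, a j = 0 := by
          apply Finset.sum_eq_zero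
          intro j hj
          apply hPsupp
          intro hjP
          exact (Finset.mem_compl.mp hj) (by rw [hΛdef, Finset.mem_union]; exact Or.inl hjP)
        have hinter : Λᶜ ∩ Wstar = Wstar \ W1 := by
          ext j
          rw [Finset.mem_inter, Finset.mem_compl, Finset.mem_sdiff, hΛdef, Finset.mem_union]
          constructor
          · rintro ⟨hn, hw⟩
            exact ⟨hw, fun h => hn (Or.inr h)⟩
          · rintro ⟨hw, hn⟩
            exact ⟨fun h => (by rcases h with h | h; exact hWstarP j hw h; exact hn h), hw⟩
        have hintercard : (Λᶜ ∩ Wstar).card = s + 1 - r := by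
          rw [hinter, Finset.card_sdiff_of_subset hW1sub, hWstarcard, hW1card]
          omega
        have hLHS : ∑ j ∈ Λᶜ, atld j = ((s + 1 - r : ℕ) : ℝ) * ε := by
          rw [hatld]
          simp only []
          rw [Finset.sum_add_distrib, hLa, zero_add, Finset.sum_ite_mem, Finset.sum_const,
            hintercard, nsmul_eq_mul]
        rw [hLHS]
        -- RHS
        have hΩV : s + 1 - r ≤ (Ω' ∩ V).card := by
          have h3 := Finset.card_inter_add_card_union Ω' V
          have h4 : (Ω' ∪ V).card ≤ N := by
            have := Finset.card_le_univ (Ω' ∪ V)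
            simpa using this
          rw [hΩ', hVcard] at h3
          omega
        have h5 : ∑ j ∈ Ω' ∩ V, b j ≤ ∑ j ∈ Ω', b j := by
          apply Finset.sum_le_sum_of_subset_of_nonneg Finset.inter_subset_left
          intro j _ _; exact hb0 j
        have h6 : ((Ω' ∩ V).card : ℝ) * β₀ ≤ ∑ j ∈ Ω' ∩ V, b j := by
          rw [← nsmul_eq_mul]
          apply Finset.card_nsmul_le_sum
          intro j hj
          exact hβ₀le j (Finset.mem_inter.mp hj).2
        have h7 : ((s + 1 - r : ℕ) : ℝ) * ε ≤ ((Ω' ∩ V).card : ℝ) * β₀ := by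
          apply mul_le_mul (by exact_mod_cast Nat.cast_le.mpr hΩV) hεβ (le_of_lt hε0)
          exact Nat.cast_nonneg _
        linarith
      · -- r < p
        push_neg at h1 h2
        obtain ⟨Emax, hEmaxcard, hEmaxsum⟩ := hTopSum_ex r (by omega)
        refine ⟨Emaxᶜ, by rw [Finset.card_compl, hEmaxcard, Fintype.card_fin]; omega, ?_⟩
        intro Ω' hΩ'
        have hLa : ∑ j ∈ Emaxᶜ, a j = ∑ j ∈ univ, a j - TopSum r := by
          have := Finset.sum_compl_add_sum Emax a
          rw [hEmaxsum] at this
          linarith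
        have hLind : ∑ j ∈ Emaxᶜ, (if j ∈ Wstar then ε else 0) ≤ (s + 1 : ℝ) * ε := by
          rw [Finset.sum_ite_mem, Finset.sum_const, nsmul_eq_mul]
          have hcardle : (Emaxᶜ ∩ Wstar).card ≤ s + 1 := by
            calc (Emaxᶜ ∩ Wstar).card ≤ Wstar.card := Finset.card_le_card Finset.inter_subset_right
              _ = s - p + 1 := hWstarcard
              _ ≤ s + 1 := by omega
          have hcast : ((Emaxᶜ ∩ Wstar).card : ℝ) ≤ (s + 1 : ℝ) := by exact_mod_cast hcardle
          exact mul_le_mul_of_nonneg_right hcast (le_of_lt hε0)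
        have hLHS : ∑ j ∈ Emaxᶜ, atld j ≤ (∑ j ∈ univ, a j - TopSum r) + (s + 1 : ℝ) * ε := by
          rw [hatld]
          simp only []
          rw [Finset.sum_add_distrib, hLa]
          linarith
        -- RHS
        set Λ : Finset (Fin N) := Ω'ᶜ with hΛdef
        have hΛcard : Λ.card = r := by
          rw [hΛdef, Finset.card_compl, hΩ', Fintype.card_fin]
        have hΛmem : Λ ∈ Λfam := by
          rw [hΛfam]
          apply Finset.mem_insert_of_mem
          rw [Finset.mem_biUnion]
          exact ⟨r, Finset.mem_range.mpr h2, Finset.mem_powersetCard.mpr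
            ⟨Finset.subset_univ _, hΛcard⟩⟩
        have h5 := hδ₀le Λ hΛmem
        rw [hmargin] at h5
        simp only [] at h5
        rw [hΛcard] at h5
        have hΛc : Λᶜ = Ω' := by rw [hΛdef, compl_compl]
        rw [hΛc] at h5
        linarith
  -- conclusion
  have hx_eq : R x = R a := habs x
  have hz_eq : R z = R b := habs z
  rw [hx_eq, hz_eq]
  linarith
end helpers
end
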